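/- arXiv:2302.03232 — 9 statements merged into one kernel-verified Lean document; each statement's English description precedes it below -/
import Mathlib

section
/- Let μ⁰ = Σ_{n=1}^{N₀} p⁰ₙ δ_{x⁰ₙ} and μʲ = Σ_{m=1}^{Nⱼ} pʲₘ δ_{xʲₘ} be discrete probability measures on ℝ^d and let γ be an optimal coupling for OT(μ⁰,μʲ). Define the barycentric points x̂ₙ = (1/p⁰ₙ) Σ_{m=1}^{Nⱼ} γₙₘ xʲₘ and the OT barycentric projection μ̂ʲ = Σ_{n=1}^{N₀} p⁰ₙ δ_{x̂ₙ}. Then the diagonal matrix diag(p⁰₁,…,p⁰_{N₀}) is an optimal coupling for OT(μ⁰,μ̂ʲ): for every matrix γ̂ ∈ ℝ^{N₀×N₀} with nonnegative entries whose row sums and column sums both equal p⁰, one has Σ_{n=1}^{N₀} p⁰ₙ ‖x⁰ₙ − x̂ₙ‖² ≤ Σ_{n,k=1}^{N₀} γ̂ₙₖ ‖x⁰ₙ − x̂ₖ‖². -/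
/-!
Write `T(η) = ∑ₙₘ ηₙₘ ⟪x⁰ₙ, xʲₘ⟫`. Among couplings with fixed marginals, the quadratic cost equals
a constant minus `2 T(η)`, so optimality means maximal `T`. Any coupling `γ̂` of `(p⁰, p⁰)` glues
with `γ` to the coupling `γ̂ diag(p⁰)⁻¹ γ` of `(p⁰, pʲ)`, and since `x̂` depends linearly on `γ`,
`T` of `γ̂` for the pair `(x⁰, x̂)` is `T` of the glued coupling for `(x⁰, xʲ)`; for `γ̂ = diag(p⁰)`
the glued coupling is `γ` itself. Optimality of `γ` therefore gives optimality of `diag(p⁰)`.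
-/

open scoped InnerProductSpace
open Finset Matrix

namespace DiscreteOT

variable {ι κ ν E : Type*}

theorem mul_diagonal_inv_mul_apply [Fintype κ] [DecidableEq κ] (A : Matrix ι κ ℝ) (q : κ → ℝ)
    (B : Matrix κ ν ℝ) (i : ι) (m : ν) :
    (A * diagonal q⁻¹ * B) i m = ∑ k, A i k * (q k)⁻¹ * B k m := by
  rw [mul_apply]
  simp only [mul_diagonal, Pi.inv_apply]

theorem diagonal_mul_diagonal_inv_mul [Fintype κ] [DecidableEq κ] {p : κ → ℝ}
    (hp : ∀ k, p k ≠ 0) (γ : Matrix κ ν ℝ) : diagonal p * diagonal p⁻¹ * γ = γ := by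
  rw [diagonal_mul_diagonal]
  simp only [Pi.inv_apply, mul_inv_cancel₀ (hp _), diagonal_one, Matrix.one_mul]

variable [Fintype ι] [Fintype κ] [Fintype ν] [NormedAddCommGroup E]

structure HasMarginals (p : ι → ℝ) (q : κ → ℝ) (γ : Matrix ι κ ℝ) : Prop where
  row_sum : ∀ i, ∑ j, γ i j = p i
  col_sum : ∀ j, ∑ i, γ i j = q j

structure IsCoupling (p : ι → ℝ) (q : κ → ℝ) (γ : Matrix ι κ ℝ) : Prop
    extends HasMarginals p q γ where
  nonneg : ∀ i j, 0 ≤ γ i j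

def cost (x : ι → E) (y : κ → E) (γ : Matrix ι κ ℝ) : ℝ :=
  ∑ i, ∑ j, ‖x i - y j‖ ^ 2 * γ i j

theorem cost_diagonal [DecidableEq ι] (p : ι → ℝ) (x y : ι → E) :
    cost x y (diagonal p) = ∑ i, ‖x i - y i‖ ^ 2 * p i := by
  simp [cost, diagonal_apply]

variable [InnerProductSpace ℝ E]

def correlation (x : ι → E) (y : κ → E) (γ : Matrix ι κ ℝ) : ℝ :=
  ∑ i, ∑ j, γ i j * ⟪x i, y j⟫_ℝ

noncomputable def barycentricProjection (p : κ → ℝ) (y : ν → E) (γ : Matrix κ ν ℝ) (k : κ) : E :=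
  (p k)⁻¹ • ∑ m, γ k m • y m

theorem cost_eq {p : ι → ℝ} {q : κ → ℝ} {γ : Matrix ι κ ℝ} (hγ : HasMarginals p q γ)
    (x : ι → E) (y : κ → E) :
    cost x y γ = ∑ i, p i * ‖x i‖ ^ 2 - 2 * correlation x y γ + ∑ j, q j * ‖y j‖ ^ 2 := by
  have hterm : ∀ i j, ‖x i - y j‖ ^ 2 * γ i j
      = γ i j * ‖x i‖ ^ 2 - 2 * (γ i j * ⟪x i, y j⟫_ℝ) + γ i j * ‖y j‖ ^ 2 := by
    intro i j
    rw [norm_sub_sq_real]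
    ring
  have hleft : ∑ i, ∑ j, γ i j * ‖x i‖ ^ 2 = ∑ i, p i * ‖x i‖ ^ 2 := by
    simp only [← sum_mul, hγ.row_sum]
  have hright : ∑ i, ∑ j, γ i j * ‖y j‖ ^ 2 = ∑ j, q j * ‖y j‖ ^ 2 := by
    rw [sum_comm]
    simp only [← sum_mul, hγ.col_sum]
  simp only [cost, correlation, hterm, sum_add_distrib, sum_sub_distrib, ← mul_sum, hleft, hright]

theorem cost_le_cost_iff {p : ι → ℝ} {q : κ → ℝ} {γ γ' : Matrix ι κ ℝ}
    (hγ : HasMarginals p q γ) (hγ' : HasMarginals p q γ') (x : ι → E) (y : κ → E) :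
    cost x y γ ≤ cost x y γ' ↔ correlation x y γ' ≤ correlation x y γ := by
  rw [cost_eq hγ, cost_eq hγ']
  constructor <;> intro h <;> linarith

theorem hasMarginals_diagonal [DecidableEq ι] (p : ι → ℝ) : HasMarginals p p (diagonal p) where
  row_sum i := by simp [diagonal_apply]
  col_sum j := by simp [diagonal_apply]

theorem HasMarginals.glue [DecidableEq κ] {p : ι → ℝ} {q : κ → ℝ} {r : ν → ℝ}
    {A : Matrix ι κ ℝ} {B : Matrix κ ν ℝ} (hA : HasMarginals p q A) (hB : HasMarginals q r B)
    (hq : ∀ k, q k ≠ 0) : HasMarginals p r (A * diagonal q⁻¹ * B) where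
  row_sum i := by
    simp only [mul_diagonal_inv_mul_apply]
    rw [sum_comm]
    simp only [← mul_sum, hB.row_sum, inv_mul_cancel_right₀ (hq _), hA.row_sum]
  col_sum m := by
    simp only [mul_diagonal_inv_mul_apply]
    rw [sum_comm]
    simp only [← sum_mul, hA.col_sum, mul_inv_cancel₀ (hq _), one_mul, hB.col_sum]

theorem IsCoupling.glue [DecidableEq κ] {p : ι → ℝ} {q : κ → ℝ} {r : ν → ℝ}
    {A : Matrix ι κ ℝ} {B : Matrix κ ν ℝ} (hA : IsCoupling p q A) (hB : IsCoupling q r B)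
    (hq : ∀ k, q k ≠ 0) : IsCoupling p r (A * diagonal q⁻¹ * B) where
  toHasMarginals := hA.toHasMarginals.glue hB.toHasMarginals hq
  nonneg i m := by
    have hq_nonneg : ∀ k, 0 ≤ q k := fun k => hB.row_sum k ▸ sum_nonneg fun j _ => hB.nonneg k j
    rw [mul_diagonal_inv_mul_apply]
    exact sum_nonneg fun k _ =>
      mul_nonneg (mul_nonneg (hA.nonneg i k) (inv_nonneg.2 (hq_nonneg k))) (hB.nonneg k m)

theorem correlation_barycentricProjection [DecidableEq κ] (x : ι → E) (p : κ → ℝ) (y : ν → E)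
    (γ : Matrix κ ν ℝ) (A : Matrix ι κ ℝ) :
    correlation x (barycentricProjection p y γ) A = correlation x y (A * diagonal p⁻¹ * γ) := by
  have hinner : ∀ i k, ⟪x i, barycentricProjection p y γ k⟫_ℝ
      = ∑ m, (p k)⁻¹ * γ k m * ⟪x i, y m⟫_ℝ := by
    intro i k
    simp only [barycentricProjection, real_inner_smul_right, inner_sum, mul_sum, mul_assoc]
  unfold correlation
  refine sum_congr rfl fun i _ => ?_
  simp only [hinner, mul_diagonal_inv_mul_apply, mul_sum, sum_mul]
  rw [sum_comm]
  exact sum_congr rfl fun m _ => sum_congr rfl fun k _ => by ring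

end DiscreteOT

open DiscreteOT

theorem ot_barycentric_projection_diag_optimal_general
    {d N0 Nj : ℕ}
    (p0 : Fin N0 → ℝ) (pj : Fin Nj → ℝ)
    (x0 : Fin N0 → EuclideanSpace ℝ (Fin d)) (xj : Fin Nj → EuclideanSpace ℝ (Fin d))
    (hp0 : ∀ n, 0 < p0 n)
    (γ : Matrix (Fin N0) (Fin Nj) ℝ)
    (hγnn : ∀ n m, 0 ≤ γ n m)
    (hγrow : ∀ n, ∑ m, γ n m = p0 n)
    (hγcol : ∀ m, ∑ n, γ n m = pj m)
    (hγopt : ∀ γ' : Matrix (Fin N0) (Fin Nj) ℝ,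
      (∀ n m, 0 ≤ γ' n m) → (∀ n, ∑ m, γ' n m = p0 n) → (∀ m, ∑ n, γ' n m = pj m) →
      ∑ n, ∑ m, ‖x0 n - xj m‖ ^ 2 * γ n m ≤ ∑ n, ∑ m, ‖x0 n - xj m‖ ^ 2 * γ' n m)
    (xhat : Fin N0 → EuclideanSpace ℝ (Fin d))
    (hxhat : ∀ n, xhat n = (p0 n)⁻¹ • ∑ m, γ n m • xj m) :
    ∀ γhat : Matrix (Fin N0) (Fin N0) ℝ,
      (∀ n k, 0 ≤ γhat n k) → (∀ n, ∑ k, γhat n k = p0 n) → (∀ k, ∑ n, γhat n k = p0 k) →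
      ∑ n, p0 n * ‖x0 n - xhat n‖ ^ 2 ≤ ∑ n, ∑ k, γhat n k * ‖x0 n - xhat k‖ ^ 2 := by
  intro γhat hnn hrow hcol
  have hp0_ne : ∀ n, p0 n ≠ 0 := fun n => (hp0 n).ne'
  have hγ : IsCoupling p0 pj γ := ⟨⟨hγrow, hγcol⟩, hγnn⟩
  have hγhat : IsCoupling p0 p0 γhat := ⟨⟨hrow, hcol⟩, hnn⟩
  have hglued := hγhat.glue hγ hp0_ne
  have hcorr : correlation x0 xj (γhat * diagonal p0⁻¹ * γ) ≤ correlation x0 xj γ :=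
    (cost_le_cost_iff hγ.toHasMarginals hglued.toHasMarginals x0 xj).1
      (hγopt _ hglued.nonneg hglued.row_sum hglued.col_sum)
  obtain rfl : xhat = barycentricProjection p0 xj γ := funext hxhat
  have hdiag : cost x0 (barycentricProjection p0 xj γ) (diagonal p0)
      ≤ cost x0 (barycentricProjection p0 xj γ) γhat := by
    rw [cost_le_cost_iff (hasMarginals_diagonal p0) hγhat.toHasMarginals,
      correlation_barycentricProjection, correlation_barycentricProjection,
      diagonal_mul_diagonal_inv_mul hp0_ne]
    exact hcorr
  rw [cost_diagonal] at hdiag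
  simpa only [cost, mul_comm] using hdiag

/-- If `γ` is an optimal coupling for the discrete optimal transport
problem between `μ⁰ = ∑ₙ p⁰ₙ δ_{x⁰ₙ}` and `μʲ = ∑ₘ pʲₘ δ_{xʲₘ}`, then the diagonal
coupling `diag(p⁰)` is optimal between `μ⁰` and the OT barycentric projection
`μ̂ʲ = ∑ₙ p⁰ₙ δ_{x̂ₙ}`, where `x̂ₙ = (p⁰ₙ)⁻¹ ∑ₘ γₙₘ xʲₘ`. -/
theorem ot_barycentric_projection_diag_optimal
    {d N0 Nj : ℕ}
    (p0 : Fin N0 → ℝ) (pj : Fin Nj → ℝ)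
    (x0 : Fin N0 → EuclideanSpace ℝ (Fin d)) (xj : Fin Nj → EuclideanSpace ℝ (Fin d))
    (hp0 : ∀ n, 0 < p0 n) (hpj : ∀ m, 0 < pj m)
    (hp0sum : ∑ n, p0 n = 1) (hpjsum : ∑ m, pj m = 1)
    (γ : Matrix (Fin N0) (Fin Nj) ℝ)
    (hγnn : ∀ n m, 0 ≤ γ n m)
    (hγrow : ∀ n, ∑ m, γ n m = p0 n)
    (hγcol : ∀ m, ∑ n, γ n m = pj m)
    (hγopt : ∀ γ' : Matrix (Fin N0) (Fin Nj) ℝ,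
      (∀ n m, 0 ≤ γ' n m) → (∀ n, ∑ m, γ' n m = p0 n) → (∀ m, ∑ n, γ' n m = pj m) →
      ∑ n, ∑ m, ‖x0 n - xj m‖ ^ 2 * γ n m ≤ ∑ n, ∑ m, ‖x0 n - xj m‖ ^ 2 * γ' n m)
    (xhat : Fin N0 → EuclideanSpace ℝ (Fin d))
    (hxhat : ∀ n, xhat n = (p0 n)⁻¹ • ∑ m, γ n m • xj m) :
    ∀ γhat : Matrix (Fin N0) (Fin N0) ℝ,
      (∀ n k, 0 ≤ γhat n k) → (∀ n, ∑ k, γhat n k = p0 n) → (∀ k, ∑ n, γhat n k = p0 k) →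
      ∑ n, p0 n * ‖x0 n - xhat n‖ ^ 2 ≤ ∑ n, ∑ k, γhat n k * ‖x0 n - xhat k‖ ^ 2 :=
  ot_barycentric_projection_diag_optimal_general p0 pj x0 xj hp0 γ hγnn hγrow hγcol hγopt xhat hxhat
end

section
/- Let μ⁰ = Σ_{n=1}^{N₀} p⁰ₙ δ_{x⁰ₙ} and μʲ = Σ_{m=1}^{Nⱼ} pʲₘ δ_{xʲₘ} be discrete probability measures on ℝ^d and let γ be an optimal coupling for OT(μ⁰,μʲ) that is induced by a map (each row of γ has at most one nonzero entry). Let x̂ₙ = (1/p⁰ₙ) Σ_{m=1}^{Nⱼ} γₙₘ xʲₘ, let μ̂ʲ = Σ_{n=1}^{N₀} p⁰ₙ δ_{x̂ₙ}, and let uʲ be the LOT embedding of μʲ, i.e. uʲₙ = x̂ₙ − x⁰ₙ. Then ‖uʲ‖²_{μ⁰} := Σ_{n=1}^{N₀} p⁰ₙ ‖x̂ₙ − x⁰ₙ‖² satisfies ‖uʲ‖²_{μ⁰} = OT(μ⁰,μ̂ʲ) = OT(μ⁰,μʲ). -/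
open scoped BigOperators

/-- The optimal transport cost between the discrete measures `∑ₙ pₙ δ_{xₙ}` and
`∑ₘ qₘ δ_{yₘ}`: the infimum of the quadratic transport cost over all couplings. -/
noncomputable def OTcost {d N M : ℕ} (p : Fin N → ℝ) (q : Fin M → ℝ)
    (x : Fin N → EuclideanSpace ℝ (Fin d)) (y : Fin M → EuclideanSpace ℝ (Fin d)) : ℝ :=
  sInf {c | ∃ γ : Matrix (Fin N) (Fin M) ℝ,
    (∀ n m, 0 ≤ γ n m) ∧ (∀ n, ∑ m, γ n m = p n) ∧ (∀ m, ∑ n, γ n m = q m) ∧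
    c = ∑ n, ∑ m, ‖x n - y m‖ ^ 2 * γ n m}

/-- If the optimal coupling `γ` for `OT(μ⁰,μʲ)` is induced by a map,
then the squared norm of the LOT embedding `uʲₙ = x̂ₙ - x⁰ₙ` equals both
`OT(μ⁰, μ̂ʲ)` and `OT(μ⁰, μʲ)`. -/
theorem lot_embedding_norm_eq_ot
    {d N0 Nj : ℕ}
    (p0 : Fin N0 → ℝ) (pj : Fin Nj → ℝ)
    (x0 : Fin N0 → EuclideanSpace ℝ (Fin d)) (xj : Fin Nj → EuclideanSpace ℝ (Fin d))
    (hp0 : ∀ n, 0 < p0 n) (hpj : ∀ m, 0 < pj m)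
    (hp0sum : ∑ n, p0 n = 1) (hpjsum : ∑ m, pj m = 1)
    (γ : Matrix (Fin N0) (Fin Nj) ℝ)
    (hγnn : ∀ n m, 0 ≤ γ n m)
    (hγrow : ∀ n, ∑ m, γ n m = p0 n)
    (hγcol : ∀ m, ∑ n, γ n m = pj m)
    (hγopt : ∀ γ' : Matrix (Fin N0) (Fin Nj) ℝ,
      (∀ n m, 0 ≤ γ' n m) → (∀ n, ∑ m, γ' n m = p0 n) → (∀ m, ∑ n, γ' n m = pj m) →
      ∑ n, ∑ m, ‖x0 n - xj m‖ ^ 2 * γ n m ≤ ∑ n, ∑ m, ‖x0 n - xj m‖ ^ 2 * γ' n m)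
    (hmap : ∀ n m m', γ n m ≠ 0 → γ n m' ≠ 0 → m = m')
    (xhat : Fin N0 → EuclideanSpace ℝ (Fin d))
    (hxhat : ∀ n, xhat n = (p0 n)⁻¹ • ∑ m, γ n m • xj m) :
    (∑ n, p0 n * ‖xhat n - x0 n‖ ^ 2) = OTcost p0 p0 x0 xhat ∧
      OTcost p0 p0 x0 xhat = OTcost p0 pj x0 xj := by
  classical
  -- each row has a support point
  have hmn : ∀ n, ∃ m, γ n m ≠ 0 := by
    intro n
    by_contra h
    push_neg at h
    have h0 : ∑ m, γ n m = 0 := by simp [h]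
    rw [hγrow n] at h0
    exact (hp0 n).ne' h0
  choose mn hmnne using hmn
  -- γ is a "map" coupling
  have hγform : ∀ n m, γ n m = if m = mn n then p0 n else 0 := by
    intro n m
    by_cases h : m = mn n
    · subst h
      have hs : ∑ m', γ n m' = γ n (mn n) := by
        rw [Finset.sum_eq_single (mn n)]
        · intro b _ hb
          by_contra hb0
          exact hb (hmap n b (mn n) hb0 (hmnne n))
        · simp
      simp [← hs, hγrow n]
    · simp only [h, if_false]
      by_contra hb0
      exact h (hmap n m (mn n) hb0 (hmnne n))
  have hxhat' : ∀ n, xhat n = xj (mn n) := by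
    intro n
    rw [hxhat n]
    have hs : ∑ m, γ n m • xj m = p0 n • xj (mn n) := by
      rw [Finset.sum_eq_single (mn n)]
      · rw [hγform]; simp
      · intro b _ hb
        rw [hγform]; simp [hb]
      · simp
    rw [hs, smul_smul, inv_mul_cancel₀ (hp0 n).ne', one_smul]
  set V := ∑ n, ∑ m, ‖x0 n - xj m‖ ^ 2 * γ n m with hV
  have hVsum : (∑ n, p0 n * ‖xhat n - x0 n‖ ^ 2) = V := by
    rw [hV]
    apply Finset.sum_congr rfl
    intro n _
    have : ∀ m, ‖x0 n - xj m‖ ^ 2 * γ n m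
        = if m = mn n then ‖x0 n - xj (mn n)‖ ^ 2 * p0 n else 0 := by
      intro m
      rw [hγform]
      by_cases h : m = mn n <;> simp [h]
    rw [Finset.sum_congr rfl (fun m _ => this m), Finset.sum_ite_eq' Finset.univ (mn n)]
    simp [hxhat' n, norm_sub_rev, mul_comm]
  -- lower bound: any coupling between (p0,x0) and (p0,xhat) costs at least V
  have hlow : ∀ γ' : Matrix (Fin N0) (Fin N0) ℝ,
      (∀ n m, 0 ≤ γ' n m) → (∀ n, ∑ m, γ' n m = p0 n) → (∀ m, ∑ n, γ' n m = p0 m) →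
      V ≤ ∑ n, ∑ m, ‖x0 n - xhat m‖ ^ 2 * γ' n m := by
    intro γ' hnn hrow hcol
    set γ'' : Matrix (Fin N0) (Fin Nj) ℝ :=
      fun n m => ∑ n', if mn n' = m then γ' n n' else 0 with hγ''
    have hnn'' : ∀ n m, 0 ≤ γ'' n m := by
      intro n m
      apply Finset.sum_nonneg
      intro n' _
      split <;> [exact hnn n n'; exact le_refl 0]
    have hrow'' : ∀ n, ∑ m, γ'' n m = p0 n := by
      intro n
      rw [hγ'']
      rw [Finset.sum_comm]
      calc ∑ n', ∑ m, (if mn n' = m then γ' n n' else 0)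
          = ∑ n', γ' n n' := by
            apply Finset.sum_congr rfl
            intro n' _
            rw [Finset.sum_ite_eq Finset.univ (mn n')]
            simp
        _ = p0 n := hrow n
    have hcol'' : ∀ m, ∑ n, γ'' n m = pj m := by
      intro m
      rw [hγ'']
      rw [Finset.sum_comm]
      calc ∑ n', ∑ n, (if mn n' = m then γ' n n' else 0)
          = ∑ n', (if mn n' = m then p0 n' else 0) := by
            apply Finset.sum_congr rfl
            intro n' _
            by_cases h : mn n' = m <;> simp [h, hcol n']
        _ = ∑ n', γ n' m := by
            apply Finset.sum_congr rfl
            intro n' _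
            rw [hγform]
            by_cases h : mn n' = m
            · simp [h]
            · rw [if_neg h, if_neg (fun hh => h hh.symm)]
        _ = pj m := hγcol m
    have hcost : ∑ n, ∑ m, ‖x0 n - xj m‖ ^ 2 * γ'' n m
        = ∑ n, ∑ m, ‖x0 n - xhat m‖ ^ 2 * γ' n m := by
      apply Finset.sum_congr rfl
      intro n _
      rw [hγ'']
      calc ∑ m, ‖x0 n - xj m‖ ^ 2 * ∑ n', (if mn n' = m then γ' n n' else 0)
          = ∑ m, ∑ n', (if mn n' = m then ‖x0 n - xj m‖ ^ 2 * γ' n n' else 0) := by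
            apply Finset.sum_congr rfl
            intro m _
            rw [Finset.mul_sum]
            apply Finset.sum_congr rfl
            intro n' _
            by_cases h : mn n' = m <;> simp [h]
        _ = ∑ n', ∑ m, (if mn n' = m then ‖x0 n - xj m‖ ^ 2 * γ' n n' else 0) :=
            Finset.sum_comm
        _ = ∑ n', ‖x0 n - xhat n'‖ ^ 2 * γ' n n' := by
            apply Finset.sum_congr rfl
            intro n' _
            rw [Finset.sum_ite_eq Finset.univ (mn n')]
            simp [hxhat' n']
    rw [← hcost]
    exact hγopt γ'' hnn'' hrow'' hcol''
  -- OTcost p0 pj x0 xj = V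
  have hOT2 : OTcost p0 pj x0 xj = V := by
    apply IsLeast.csInf_eq
    constructor
    · exact ⟨γ, hγnn, hγrow, hγcol, rfl⟩
    · rintro c ⟨γ', h1, h2, h3, rfl⟩
      exact hγopt γ' h1 h2 h3
  -- OTcost p0 p0 x0 xhat = V
  have hOT1 : OTcost p0 p0 x0 xhat = V := by
    apply IsLeast.csInf_eq
    constructor
    · refine ⟨fun n m => if m = n then p0 n else 0, ?_, ?_, ?_, ?_⟩
      · intro n m
        dsimp only
        split <;> [exact (hp0 _).le; exact le_refl 0]
      · intro n
        rw [Finset.sum_ite_eq' Finset.univ n]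
        simp
      · intro m
        rw [Finset.sum_ite_eq Finset.univ m]
        simp
      · rw [← hVsum]
        apply Finset.sum_congr rfl
        intro n _
        rw [Finset.sum_congr rfl (fun m (_ : m ∈ Finset.univ) => by
          by_cases h : m = n
          · subst h; simp
          · simp [h] : ∀ m ∈ Finset.univ,
              ‖x0 n - xhat m‖ ^ 2 * (if m = n then p0 n else 0)
                = if m = n then ‖x0 n - xhat n‖ ^ 2 * p0 n else 0)]
        rw [Finset.sum_ite_eq' Finset.univ n]
        simp [norm_sub_rev, mul_comm]
    · rintro c ⟨γ', h1, h2, h3, rfl⟩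
      exact hlow γ' h1 h2 h3
  rw [hOT1, hOT2, hVsum]
  exact ⟨rfl, rfl⟩
end

section
/- Let μ⁰ = Σ_{k=1}^{N₀} p⁰ₖ δ_{x⁰ₖ}, μ¹ = Σ_{k=1}^{N₀} p⁰ₖ δ_{x¹ₖ}, μ² = Σ_{k=1}^{N₀} p⁰ₖ δ_{x²ₖ} be discrete probability measures on ℝ^d sharing the same weights p⁰. Suppose that the diagonal coupling diag(p⁰₁,…,p⁰_{N₀}) is optimal both for OT(μ⁰,μ¹) (i.e. the map x⁰ₖ ↦ x¹ₖ is an optimal transport map) and for OT(μ⁰,μ²) (i.e. x⁰ₖ ↦ x²ₖ is optimal). For t ∈ [0,1] define μ_t = Σ_{k=1}^{N₀} p⁰ₖ δ_{(1−t)x¹ₖ + t x²ₖ}. Then the diagonal coupling diag(p⁰₁,…,p⁰_{N₀}) is optimal for OT(μ⁰,μ_t); that is, the map x⁰ₖ ↦ (1−t)x¹ₖ + t x²ₖ solves OT(μ⁰,μ_t). -/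
/-!
Expanding the square gives `‖x - ((1 - t) • y + t • z)‖² = (1 - t) ‖x - y‖² + t ‖x - z‖² -
t (1 - t) ‖y - z‖²`. The last term depends only on the target index, so every coupling with
second marginal `p⁰` pays the same amount for it. Hence the cost for `μ_t` is, up to a constant,
a nonnegative combination of the costs for `μ¹` and `μ²`, and the diagonal coupling, which
minimises both, minimises it too.
-/

theorem norm_one_sub_smul_add_smul_sq {E : Type*} [SeminormedAddCommGroup E] [InnerProductSpace ℝ E]
    (t : ℝ) (u v : E) :
    ‖(1 - t) • u + t • v‖ ^ 2 = (1 - t) * ‖u‖ ^ 2 + t * ‖v‖ ^ 2 - t * (1 - t) * ‖u - v‖ ^ 2 := by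
  rw [norm_add_sq_real, norm_sub_sq_real, norm_smul, norm_smul, real_inner_smul_left,
    real_inner_smul_right, mul_pow, mul_pow, Real.norm_eq_abs, Real.norm_eq_abs, sq_abs, sq_abs]
  ring

theorem norm_sub_one_sub_smul_add_smul_sq {E : Type*} [SeminormedAddCommGroup E] [InnerProductSpace ℝ E]
    (t : ℝ) (x y z : E) :
    ‖x - ((1 - t) • y + t • z)‖ ^ 2
      = (1 - t) * ‖x - y‖ ^ 2 + t * ‖x - z‖ ^ 2 - t * (1 - t) * ‖y - z‖ ^ 2 := by
  have hx : x - ((1 - t) • y + t • z) = (1 - t) • (x - y) + t • (x - z) := by module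
  rw [hx, norm_one_sub_smul_add_smul_sq, sub_sub_sub_cancel_left, norm_sub_rev z y]

section Coupling

variable {ι κ : Type*} [Fintype ι] [Fintype κ]

def couplingCost (c : ι → κ → ℝ) (γ : Matrix ι κ ℝ) : ℝ :=
  ∑ n, ∑ k, c n k * γ n k

theorem couplingCost_diagonal [DecidableEq ι] (c : ι → ι → ℝ) (p : ι → ℝ) :
    couplingCost c (Matrix.diagonal p) = ∑ k, p k * c k k := by
  simp [couplingCost, Matrix.diagonal_apply, mul_comm]

theorem couplingCost_combination (a b : ℝ) (c c' : ι → κ → ℝ) (f : κ → ℝ) (γ : Matrix ι κ ℝ) :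
    couplingCost (fun n k => a * c n k + b * c' n k - f k) γ
      = a * couplingCost c γ + b * couplingCost c' γ - ∑ k, f k * ∑ n, γ n k := by
  have hf : ∑ k, f k * ∑ n, γ n k = ∑ n, ∑ k, f k * γ n k := by
    simp only [Finset.mul_sum]
    exact Finset.sum_comm
  rw [hf]
  simp only [couplingCost, Finset.mul_sum, ← Finset.sum_add_distrib, ← Finset.sum_sub_distrib]
  exact Finset.sum_congr rfl fun n _ => Finset.sum_congr rfl fun k _ => by ring

theorem couplingCost_combination_le {a b : ℝ} (ha : 0 ≤ a) (hb : 0 ≤ b) {c c' : ι → κ → ℝ}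
    (f : κ → ℝ) {γ₀ γ : Matrix ι κ ℝ} (hcol : ∀ k, ∑ n, γ₀ n k = ∑ n, γ n k)
    (hc : couplingCost c γ₀ ≤ couplingCost c γ) (hc' : couplingCost c' γ₀ ≤ couplingCost c' γ) :
    couplingCost (fun n k => a * c n k + b * c' n k - f k) γ₀
      ≤ couplingCost (fun n k => a * c n k + b * c' n k - f k) γ := by
  simp only [couplingCost_combination, hcol]
  gcongr

end Coupling

theorem diag_optimal_for_interpolated_targets_general
    {d N0 : ℕ}
    (p0 : Fin N0 → ℝ)
    (x0 x1 x2 : Fin N0 → EuclideanSpace ℝ (Fin d))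
    (hopt1 : ∀ γ : Matrix (Fin N0) (Fin N0) ℝ,
      (∀ n k, 0 ≤ γ n k) → (∀ n, ∑ k, γ n k = p0 n) → (∀ k, ∑ n, γ n k = p0 k) →
      ∑ k, p0 k * ‖x0 k - x1 k‖ ^ 2 ≤ ∑ n, ∑ k, ‖x0 n - x1 k‖ ^ 2 * γ n k)
    (hopt2 : ∀ γ : Matrix (Fin N0) (Fin N0) ℝ,
      (∀ n k, 0 ≤ γ n k) → (∀ n, ∑ k, γ n k = p0 n) → (∀ k, ∑ n, γ n k = p0 k) →
      ∑ k, p0 k * ‖x0 k - x2 k‖ ^ 2 ≤ ∑ n, ∑ k, ‖x0 n - x2 k‖ ^ 2 * γ n k) :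
    ∀ t : ℝ, 0 ≤ t → t ≤ 1 →
      ∀ γ : Matrix (Fin N0) (Fin N0) ℝ,
        (∀ n k, 0 ≤ γ n k) → (∀ n, ∑ k, γ n k = p0 n) → (∀ k, ∑ n, γ n k = p0 k) →
        ∑ k, p0 k * ‖x0 k - ((1 - t) • x1 k + t • x2 k)‖ ^ 2 ≤
          ∑ n, ∑ k, ‖x0 n - ((1 - t) • x1 k + t • x2 k)‖ ^ 2 * γ n k := by
  intro t ht0 ht1 γ hpos hrow hcol
  have hdiag_col : ∀ k, ∑ n, Matrix.diagonal p0 n k = ∑ n, γ n k := by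
    simp [Matrix.diagonal_apply, hcol]
  have key := couplingCost_combination_le (sub_nonneg.mpr ht1) ht0
    (c := fun n k => ‖x0 n - x1 k‖ ^ 2) (c' := fun n k => ‖x0 n - x2 k‖ ^ 2)
    (fun k => t * (1 - t) * ‖x1 k - x2 k‖ ^ 2) hdiag_col
    ((couplingCost_diagonal _ p0).trans_le (hopt1 γ hpos hrow hcol))
    ((couplingCost_diagonal _ p0).trans_le (hopt2 γ hpos hrow hcol))
  rw [couplingCost_diagonal] at key
  simpa only [couplingCost, norm_sub_one_sub_smul_add_smul_sq] using key

/-- Let `μ⁰, μ¹, μ²` be discrete probability measures on `ℝ^d`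
sharing the same weights `p⁰`, with support points `x⁰, x¹, x²`. If the diagonal
coupling `diag(p⁰)` is optimal both for `OT(μ⁰,μ¹)` and for `OT(μ⁰,μ²)`, then for
every `t ∈ [0,1]` the diagonal coupling is optimal for `OT(μ⁰, μ_t)`, where
`μ_t = ∑ₖ p⁰ₖ δ_{(1−t)x¹ₖ + t x²ₖ}`. -/
theorem diag_optimal_for_interpolated_targets
    {d N0 : ℕ}
    (p0 : Fin N0 → ℝ)
    (x0 x1 x2 : Fin N0 → EuclideanSpace ℝ (Fin d))
    (hp0 : ∀ k, 0 < p0 k) (hp0sum : ∑ k, p0 k = 1)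
    (hopt1 : ∀ γ : Matrix (Fin N0) (Fin N0) ℝ,
      (∀ n k, 0 ≤ γ n k) → (∀ n, ∑ k, γ n k = p0 n) → (∀ k, ∑ n, γ n k = p0 k) →
      ∑ k, p0 k * ‖x0 k - x1 k‖ ^ 2 ≤ ∑ n, ∑ k, ‖x0 n - x1 k‖ ^ 2 * γ n k)
    (hopt2 : ∀ γ : Matrix (Fin N0) (Fin N0) ℝ,
      (∀ n k, 0 ≤ γ n k) → (∀ n, ∑ k, γ n k = p0 n) → (∀ k, ∑ n, γ n k = p0 k) →
      ∑ k, p0 k * ‖x0 k - x2 k‖ ^ 2 ≤ ∑ n, ∑ k, ‖x0 n - x2 k‖ ^ 2 * γ n k) :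
    ∀ t : ℝ, 0 ≤ t → t ≤ 1 →
      ∀ γ : Matrix (Fin N0) (Fin N0) ℝ,
        (∀ n k, 0 ≤ γ n k) → (∀ n, ∑ k, γ n k = p0 n) → (∀ k, ∑ n, γ n k = p0 k) →
        ∑ k, p0 k * ‖x0 k - ((1 - t) • x1 k + t • x2 k)‖ ^ 2 ≤
          ∑ n, ∑ k, ‖x0 n - ((1 - t) • x1 k + t • x2 k)‖ ^ 2 * γ n k :=
  diag_optimal_for_interpolated_targets_general p0 x0 x1 x2 hopt1 hopt2
end

section
/- Let μ⁰ = Σ_{k=1}^{N₀} p⁰ₖ δ_{x⁰ₖ} be a discrete probability measure on ℝ^d, and let x̂ⁱₖ, x̂ʲₖ ∈ ℝ^d be such that the maps x⁰ₖ ↦ x̂ⁱₖ and x⁰ₖ ↦ x̂ʲₖ (i.e. the diagonal couplings diag(p⁰)) are optimal for OT(μ⁰, Σₖ p⁰ₖ δ_{x̂ⁱₖ}) and OT(μ⁰, Σₖ p⁰ₖ δ_{x̂ʲₖ}) respectively. Set uⁱₖ = x̂ⁱₖ − x⁰ₖ, uʲₖ = x̂ʲₖ − x⁰ₖ, u_t(k)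 = (1−t)uⁱₖ + t uʲₖ, and ρ̂_t = Σ_{k=1}^{N₀} p⁰ₖ δ_{x⁰ₖ + u_t(k)} for t ∈ [0,1]. Then: (a) for each t ∈ [0,1] the map x⁰ₖ ↦ x⁰ₖ + u_t(k) (the diagonal coupling diag(p⁰)) is optimal for OT(μ⁰, ρ̂_t); and (b) the LOT discrepancy LOT_{μ⁰}(ρ̂_s, ρ̂_t) := Σ_{k=1}^{N₀} p⁰ₖ ‖u_s(k) − u_t(k)‖² satisfies LOT_{μ⁰}(ρ̂_s, ρ̂_t) = (t−s)² · LOT_{μ⁰}(ρ̂₀, ρ̂₁) for all 0 ≤ s ≤ t ≤ 1. -/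
open scoped BigOperators
open RealInnerProductSpace

private lemma cost_expand {d N0 : ℕ} (p0 : Fin N0 → ℝ)
    (x0 w : Fin N0 → EuclideanSpace ℝ (Fin d))
    (γ : Matrix (Fin N0) (Fin N0) ℝ)
    (hcol : ∀ k, ∑ n, γ n k = p0 k) :
    ∑ n, ∑ k, ‖x0 n - (x0 k + w k)‖ ^ 2 * γ n k =
      (∑ n, ∑ k, (‖x0 n - x0 k‖ ^ 2 - 2 * ⟪x0 n - x0 k, w k⟫) * γ n k)
        + ∑ k, p0 k * ‖w k‖ ^ 2 := by
  have h : ∀ n k, ‖x0 n - (x0 k + w k)‖ ^ 2 * γ n k =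
      (‖x0 n - x0 k‖ ^ 2 - 2 * ⟪x0 n - x0 k, w k⟫) * γ n k + ‖w k‖ ^ 2 * γ n k := by
    intro n k
    have h1 : x0 n - (x0 k + w k) = (x0 n - x0 k) - w k := by abel
    rw [h1, norm_sub_sq_real]
    ring
  simp_rw [h, Finset.sum_add_distrib]
  congr 1
  rw [Finset.sum_comm]
  refine Finset.sum_congr rfl fun k _ => ?_
  rw [← Finset.mul_sum, hcol, mul_comm]

/-- Given a discrete reference `μ⁰ = ∑ₖ p⁰ₖ δ_{x⁰ₖ}` and points
`x̂ⁱ, x̂ʲ` such that the diagonal couplings are optimal for `OT(μ⁰, ∑ₖ p⁰ₖ δ_{x̂ⁱₖ})`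
and `OT(μ⁰, ∑ₖ p⁰ₖ δ_{x̂ʲₖ})`, setting `uⁱₖ = x̂ⁱₖ − x⁰ₖ`, `uʲₖ = x̂ʲₖ − x⁰ₖ`,
`u_t(k) = (1−t)uⁱₖ + t uʲₖ`, and `ρ̂_t = ∑ₖ p⁰ₖ δ_{x⁰ₖ + u_t(k)}`:
(a) for each `t ∈ [0,1]` the diagonal coupling is optimal for `OT(μ⁰, ρ̂_t)`, and
(b) `LOT_{μ⁰}(ρ̂_s, ρ̂_t) = (t−s)² · LOT_{μ⁰}(ρ̂₀, ρ̂₁)` for `0 ≤ s ≤ t ≤ 1`. -/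
theorem lot_geodesic
    {d N0 : ℕ}
    (p0 : Fin N0 → ℝ)
    (x0 xhati xhatj : Fin N0 → EuclideanSpace ℝ (Fin d))
    (hp0 : ∀ k, 0 < p0 k) (hp0sum : ∑ k, p0 k = 1)
    (hopti : ∀ γ : Matrix (Fin N0) (Fin N0) ℝ,
      (∀ n k, 0 ≤ γ n k) → (∀ n, ∑ k, γ n k = p0 n) → (∀ k, ∑ n, γ n k = p0 k) →
      ∑ k, p0 k * ‖x0 k - xhati k‖ ^ 2 ≤ ∑ n, ∑ k, ‖x0 n - xhati k‖ ^ 2 * γ n k)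
    (hoptj : ∀ γ : Matrix (Fin N0) (Fin N0) ℝ,
      (∀ n k, 0 ≤ γ n k) → (∀ n, ∑ k, γ n k = p0 n) → (∀ k, ∑ n, γ n k = p0 k) →
      ∑ k, p0 k * ‖x0 k - xhatj k‖ ^ 2 ≤ ∑ n, ∑ k, ‖x0 n - xhatj k‖ ^ 2 * γ n k)
    (u : ℝ → Fin N0 → EuclideanSpace ℝ (Fin d))
    (hu : ∀ t k, u t k = (1 - t) • (xhati k - x0 k) + t • (xhatj k - x0 k)) :
    (∀ t : ℝ, 0 ≤ t → t ≤ 1 →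
      ∀ γ : Matrix (Fin N0) (Fin N0) ℝ,
        (∀ n k, 0 ≤ γ n k) → (∀ n, ∑ k, γ n k = p0 n) → (∀ k, ∑ n, γ n k = p0 k) →
        ∑ k, p0 k * ‖x0 k - (x0 k + u t k)‖ ^ 2 ≤
          ∑ n, ∑ k, ‖x0 n - (x0 k + u t k)‖ ^ 2 * γ n k) ∧
    (∀ s t : ℝ, 0 ≤ s → s ≤ t → t ≤ 1 →
      ∑ k, p0 k * ‖u s k - u t k‖ ^ 2 =
        (t - s) ^ 2 * ∑ k, p0 k * ‖u 0 k - u 1 k‖ ^ 2) := by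
  constructor
  · intro t ht0 ht1 γ hγpos hrow hcol
    -- nonnegativity of the linear excess for the two endpoints
    have key : ∀ (xh : Fin N0 → EuclideanSpace ℝ (Fin d)),
        (∑ k, p0 k * ‖x0 k - xh k‖ ^ 2 ≤ ∑ n, ∑ k, ‖x0 n - xh k‖ ^ 2 * γ n k) →
        0 ≤ ∑ n, ∑ k,
          (‖x0 n - x0 k‖ ^ 2 - 2 * ⟪x0 n - x0 k, xh k - x0 k⟫) * γ n k := by
      intro xh hopt
      have hrw : ∀ n k, ‖x0 n - xh k‖ ^ 2 = ‖x0 n - (x0 k + (xh k - x0 k))‖ ^ 2 := by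
        intro n k
        congr 2
        abel
      simp_rw [hrw] at hopt
      rw [cost_expand p0 x0 (fun k => xh k - x0 k) γ hcol] at hopt
      have hlhs : ∀ k, p0 k * ‖x0 k - (x0 k + (xh k - x0 k))‖ ^ 2 =
          p0 k * ‖xh k - x0 k‖ ^ 2 := by
        intro k
        have : x0 k - (x0 k + (xh k - x0 k)) = -(xh k - x0 k) := by abel
        rw [this, norm_neg]
      simp_rw [hlhs] at hopt
      linarith
    have hSi := key xhati (hopti γ hγpos hrow hcol)
    have hSj := key xhatj (hoptj γ hγpos hrow hcol)
    -- diagonal cost equals ∑ p0 k ‖u t k‖²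
    have hdiag : ∀ k, p0 k * ‖x0 k - (x0 k + u t k)‖ ^ 2 = p0 k * ‖u t k‖ ^ 2 := by
      intro k
      have : x0 k - (x0 k + u t k) = -(u t k) := by abel
      rw [this, norm_neg]
    rw [cost_expand p0 x0 (u t) γ hcol]
    simp_rw [hdiag]
    have hsplit : ∀ n k,
        (‖x0 n - x0 k‖ ^ 2 - 2 * ⟪x0 n - x0 k, u t k⟫) * γ n k =
        (1 - t) * ((‖x0 n - x0 k‖ ^ 2 - 2 * ⟪x0 n - x0 k, xhati k - x0 k⟫) * γ n k)
          + t * ((‖x0 n - x0 k‖ ^ 2 - 2 * ⟪x0 n - x0 k, xhatj k - x0 k⟫) * γ n k) := by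
      intro n k
      rw [hu, inner_add_right, real_inner_smul_right, real_inner_smul_right]
      ring
    have hS : 0 ≤ ∑ n, ∑ k,
        (‖x0 n - x0 k‖ ^ 2 - 2 * ⟪x0 n - x0 k, u t k⟫) * γ n k := by
      simp_rw [hsplit, Finset.sum_add_distrib, ← Finset.mul_sum]
      have h1 : 0 ≤ 1 - t := by linarith
      positivity
    linarith
  · intro s t hs hst ht1
    have hdiff : ∀ k, u s k - u t k = (t - s) • (u 0 k - u 1 k) := by
      intro k
      rw [hu, hu, hu, hu]
      module
    have hnorm : ∀ k, p0 k * ‖u s k - u t k‖ ^ 2 =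
        (t - s) ^ 2 * (p0 k * ‖u 0 k - u 1 k‖ ^ 2) := by
      intro k
      rw [hdiff, norm_smul, mul_pow, Real.norm_eq_abs, sq_abs]
      ring
    simp_rw [hnorm, ← Finset.mul_sum]
end

section
/- Let Ω be a compact convex subset of ℝ^d, λ ≥ 0, and let μ⁰, μ¹ be finite positive Borel measures on Ω. If γ* is optimal for OPT_λ(μ⁰,μ¹), with marginals γ₀* and γ₁*, then γ* is also optimal for the partial transport problems OPT_λ(γ₀*,μ¹) and OPT_λ(μ⁰,γ₁*): γ* ∈ Γ≤(γ₀*,μ¹) with C_λ-cost (computed with reference pair (γ₀*,μ¹)) less than or equal to that of every element of Γ≤(γ₀*,μ¹), and likewise γ* ∈ Γ≤(μ⁰,γ₁*) with C_λ-cost (computed with reference pair (μ⁰,γ₁*)) less than or equal to that of every element of Γ≤(μ⁰,γ₁*). -/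
open MeasureTheory

/-- The set of partial transport plans between `μ0` and `μ1`: positive measures on the
product space whose marginals are dominated by `μ0` and `μ1` respectively. -/
def IsPartialCoupling {d : ℕ} (μ0 μ1 : Measure (EuclideanSpace ℝ (Fin d)))
    (γ : Measure (EuclideanSpace ℝ (Fin d) × EuclideanSpace ℝ (Fin d))) : Prop :=
  γ.map Prod.fst ≤ μ0 ∧ γ.map Prod.snd ≤ μ1

/-- The partial transport cost
`C_λ(γ) = ∫ ‖x−y‖² dγ + λ(|μ0 − γ₀| + |μ1 − γ₁|)`. -/
noncomputable def partialCost {d : ℕ} (lam : ℝ)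
    (μ0 μ1 : Measure (EuclideanSpace ℝ (Fin d)))
    (γ : Measure (EuclideanSpace ℝ (Fin d) × EuclideanSpace ℝ (Fin d))) : ℝ :=
  (∫ p, ‖p.1 - p.2‖ ^ 2 ∂γ) +
    lam * (((μ0 - γ.map Prod.fst) Set.univ).toReal +
           ((μ1 - γ.map Prod.snd) Set.univ).toReal)


private lemma sub_univ_toReal {α : Type*} [MeasurableSpace α] (μ ν : Measure α)
    [IsFiniteMeasure μ] (h : ν ≤ μ) :
    ((μ - ν) Set.univ).toReal = (μ Set.univ).toReal - (ν Set.univ).toReal := by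
  haveI : IsFiniteMeasure ν := isFiniteMeasure_of_le μ h
  rw [Measure.sub_apply MeasurableSet.univ h,
    ENNReal.toReal_sub_of_le (h Set.univ) (measure_ne_top μ _)]

/-- If `γ*` is optimal for `OPT_λ(μ⁰,μ¹)` with marginals `γ₀*, γ₁*`,
then `γ*` is also optimal for `OPT_λ(γ₀*, μ¹)` and for `OPT_λ(μ⁰, γ₁*)`. -/
theorem opt_plan_optimal_for_marginal_problems
    {d : ℕ} (Ω : Set (EuclideanSpace ℝ (Fin d)))
    (hΩc : IsCompact Ω) (hΩconv : Convex ℝ Ω)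
    (lam : ℝ) (hlam : 0 ≤ lam)
    (μ0 μ1 : Measure (EuclideanSpace ℝ (Fin d)))
    [IsFiniteMeasure μ0] [IsFiniteMeasure μ1]
    (hμ0 : μ0 Ωᶜ = 0) (hμ1 : μ1 Ωᶜ = 0)
    (γstar : Measure (EuclideanSpace ℝ (Fin d) × EuclideanSpace ℝ (Fin d)))
    (hmem : IsPartialCoupling μ0 μ1 γstar)
    (hopt : ∀ γ, IsPartialCoupling μ0 μ1 γ →
      partialCost lam μ0 μ1 γstar ≤ partialCost lam μ0 μ1 γ) :
    (IsPartialCoupling (γstar.map Prod.fst) μ1 γstar ∧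
      ∀ γ, IsPartialCoupling (γstar.map Prod.fst) μ1 γ →
        partialCost lam (γstar.map Prod.fst) μ1 γstar ≤
          partialCost lam (γstar.map Prod.fst) μ1 γ) ∧
    (IsPartialCoupling μ0 (γstar.map Prod.snd) γstar ∧
      ∀ γ, IsPartialCoupling μ0 (γstar.map Prod.snd) γ →
        partialCost lam μ0 (γstar.map Prod.snd) γstar ≤
          partialCost lam μ0 (γstar.map Prod.snd) γ) := by
  
  obtain ⟨h0, h1⟩ := hmem
  refine ⟨⟨⟨le_rfl, h1⟩, ?_⟩, ⟨⟨h0, le_rfl⟩, ?_⟩⟩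
  · intro γ ⟨hγ0, hγ1⟩
    have hle := hopt γ ⟨hγ0.trans h0, hγ1⟩
    simp only [partialCost] at hle ⊢
    have e1 := sub_univ_toReal μ0 (γ.map Prod.fst) (hγ0.trans h0)
    have e2 := sub_univ_toReal μ0 (γstar.map Prod.fst) h0
    haveI : IsFiniteMeasure (γstar.map Prod.fst) := isFiniteMeasure_of_le μ0 h0
    have e3 := sub_univ_toReal (γstar.map Prod.fst) (γ.map Prod.fst) hγ0
    have e4 := sub_univ_toReal (γstar.map Prod.fst) (γstar.map Prod.fst) le_rfl
    nlinarith [hle, e1, e2, e3, e4]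
  · intro γ ⟨hγ0, hγ1⟩
    have hle := hopt γ ⟨hγ0, hγ1.trans h1⟩
    simp only [partialCost] at hle ⊢
    have e1 := sub_univ_toReal μ1 (γ.map Prod.snd) (hγ1.trans h1)
    have e2 := sub_univ_toReal μ1 (γstar.map Prod.snd) h1
    haveI : IsFiniteMeasure (γstar.map Prod.snd) := isFiniteMeasure_of_le μ1 h1
    have e3 := sub_univ_toReal (γstar.map Prod.snd) (γ.map Prod.snd) hγ1
    have e4 := sub_univ_toReal (γstar.map Prod.snd) (γstar.map Prod.snd) le_rfl
    nlinarith [hle, e1, e2, e3, e4]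
end

section
/- Let Ω be a compact convex subset of ℝ^d, λ ≥ 0, and let μ⁰, μ¹ be finite positive Borel measures on Ω. Let γ* be optimal for OPT_λ(μ⁰,μ¹) with marginals γ₀*, γ₁*, and set ν⁰ = μ⁰ − γ₀* and ν¹ = μ¹ − γ₁*. Then the supports of the destroyed and created mass are at distance at least √(2λ): for every x in the support of ν⁰ and every y in the support of ν¹, ‖x − y‖ ≥ √(2λ). -/
/-!
If `x ∈ supp ν⁰` and `y ∈ supp ν¹` were closer than `√(2λ)`, then for some `c < 2λ` and small
balls `B(x, ε)`, `B(y, ε)` every pair of points of the two balls has squared distance less than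
`c`, and both balls carry unmatched mass. Adding to `γ*` a nonzero plan of mass `m` from the
unmatched mass in `B(x, ε)` to that in `B(y, ε)` costs at most `c m` in transport but removes
`2λ m` of penalty, contradicting the optimality of `γ*`.
-/

open MeasureTheory

/-- The support of a Borel measure: the set of points all of whose open
neighborhoods have nonzero measure. -/
def msupport {d : ℕ} (ν : Measure (EuclideanSpace ℝ (Fin d))) :
    Set (EuclideanSpace ℝ (Fin d)) :=
  {x | ∀ U : Set (EuclideanSpace ℝ (Fin d)), IsOpen U → x ∈ U → ν U ≠ 0}

open ProbabilityTheory Set Metric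
open scoped ENNReal

lemma MeasureTheory.Measure.smul_cond_le_restrict {α : Type*} [MeasurableSpace α]
    {μ : Measure α} {s : Set α} {m : ℝ≥0∞} (hm : m ≤ μ s) : m • μ[|s] ≤ μ.restrict s := by
  refine Measure.le_iff'.mpr fun t => ?_
  rw [ProbabilityTheory.cond, smul_smul, Measure.smul_apply, smul_eq_mul]
  exact mul_le_of_le_one_left zero_le (ENNReal.div_le_of_le_mul (by rwa [one_mul]))

lemma MeasureTheory.Measure.toReal_sub_apply_univ_of_le {α : Type*} [MeasurableSpace α]
    {μ ρ : Measure α} [IsFiniteMeasure μ] (h : ρ ≤ μ) :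
    ((μ - ρ) univ).toReal = μ.real univ - ρ.real univ := by
  have := isFiniteMeasure_of_le μ h
  rw [Measure.sub_apply .univ h, ENNReal.toReal_sub_of_le (h univ) (measure_ne_top _ _)]
  rfl

section PartialCoupling

variable {d : ℕ} {μ0 μ1 : Measure (EuclideanSpace ℝ (Fin d))}
  {γ σ : Measure (EuclideanSpace ℝ (Fin d) × EuclideanSpace ℝ (Fin d))}

namespace IsPartialCoupling

lemma isFiniteMeasure [IsFiniteMeasure μ0] (h : IsPartialCoupling μ0 μ1 γ) :
    IsFiniteMeasure γ :=
  have := isFiniteMeasure_of_le μ0 h.1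
  Measure.isFiniteMeasure_of_map measurable_fst.aemeasurable

lemma mono {μ0' μ1' : Measure (EuclideanSpace ℝ (Fin d))} (h : IsPartialCoupling μ0 μ1 γ)
    (h0 : μ0 ≤ μ0') (h1 : μ1 ≤ μ1') : IsPartialCoupling μ0' μ1' γ :=
  ⟨h.1.trans h0, h.2.trans h1⟩

lemma ae_mem_prod (h : IsPartialCoupling μ0 μ1 γ) {s t : Set (EuclideanSpace ℝ (Fin d))}
    (hs : ∀ᵐ x ∂μ0, x ∈ s) (ht : ∀ᵐ y ∂μ1, y ∈ t) : ∀ᵐ p ∂γ, p ∈ s ×ˢ t := by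
  filter_upwards
    [ae_of_ae_map measurable_fst.aemeasurable ((Measure.absolutelyContinuous_of_le h.1).ae_le hs),
     ae_of_ae_map measurable_snd.aemeasurable ((Measure.absolutelyContinuous_of_le h.2).ae_le ht)]
    with p hp1 hp2 using ⟨hp1, hp2⟩

lemma integrable_of_isCompact [IsFiniteMeasure μ0] (h : IsPartialCoupling μ0 μ1 γ)
    {Ω : Set (EuclideanSpace ℝ (Fin d))} (hΩ : IsCompact Ω) (h0 : μ0 Ωᶜ = 0) (h1 : μ1 Ωᶜ = 0)
    {f : EuclideanSpace ℝ (Fin d) × EuclideanSpace ℝ (Fin d) → ℝ} (hf : Continuous f) :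
    Integrable f γ := by
  have := h.isFiniteMeasure
  obtain ⟨C, hC⟩ := (hΩ.prod hΩ).exists_bound_of_continuousOn hf.continuousOn
  exact .of_bound hf.aestronglyMeasurable C
    ((h.ae_mem_prod (ae_iff.mpr h0) (ae_iff.mpr h1)).mono hC)

lemma add [IsFiniteMeasure μ0] [IsFiniteMeasure μ1] (h : IsPartialCoupling μ0 μ1 γ)
    (hσ : IsPartialCoupling (μ0 - γ.map Prod.fst) (μ1 - γ.map Prod.snd) σ) :
    IsPartialCoupling μ0 μ1 (γ + σ) := by
  have := isFiniteMeasure_of_le μ0 h.1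
  have := isFiniteMeasure_of_le μ1 h.2
  constructor
  · rw [Measure.map_add _ _ measurable_fst, ← Measure.sub_add_cancel_of_le h.1, add_comm]
    exact add_le_add hσ.1 le_rfl
  · rw [Measure.map_add _ _ measurable_snd, ← Measure.sub_add_cancel_of_le h.2, add_comm]
    exact add_le_add hσ.2 le_rfl

end IsPartialCoupling

lemma exists_isPartialCoupling_restrict (ν0 ν1 : Measure (EuclideanSpace ℝ (Fin d)))
    [IsFiniteMeasure ν0] [IsFiniteMeasure ν1] {s t : Set (EuclideanSpace ℝ (Fin d))}
    (hs : ν0 s ≠ 0) (ht : ν1 t ≠ 0) :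
    ∃ σ, IsPartialCoupling (ν0.restrict s) (ν1.restrict t) σ ∧ 0 < σ.real univ := by
  have := cond_isProbabilityMeasure (μ := ν0) hs
  have := cond_isProbabilityMeasure (μ := ν1) ht
  set m := min (ν0 s) (ν1 t)
  have hm : m ≠ ∞ := ((min_le_left _ _).trans_lt (measure_lt_top ν0 s)).ne
  refine ⟨m • (ν0[|s]).prod (ν1[|t]), ⟨?_, ?_⟩, ?_⟩
  · simpa [Measure.map_smul] using Measure.smul_cond_le_restrict (min_le_left _ _)
  · simpa [Measure.map_smul] using Measure.smul_cond_le_restrict (min_le_right _ _)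
  · simp only [measureReal_def, Measure.smul_apply, measure_univ, smul_eq_mul, mul_one]
    exact ENNReal.toReal_pos (lt_min (pos_iff_ne_zero.2 hs) (pos_iff_ne_zero.2 ht)).ne' hm

lemma partialCost_add [IsFiniteMeasure μ0] [IsFiniteMeasure μ1] (lam : ℝ)
    (h : IsPartialCoupling μ0 μ1 (γ + σ))
    (hγ : Integrable (fun p => ‖p.1 - p.2‖ ^ 2) γ) (hσ : Integrable (fun p => ‖p.1 - p.2‖ ^ 2) σ) :
    partialCost lam μ0 μ1 (γ + σ) =
      partialCost lam μ0 μ1 γ + (∫ p, ‖p.1 - p.2‖ ^ 2 ∂σ) - 2 * lam * σ.real univ := by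
  have := h.isFiniteMeasure
  have hγ0 : γ.map Prod.fst ≤ μ0 :=
    (Measure.map_mono (Measure.le_add_right le_rfl) measurable_fst).trans h.1
  have hγ1 : γ.map Prod.snd ≤ μ1 :=
    (Measure.map_mono (Measure.le_add_right le_rfl) measurable_snd).trans h.2
  have := isFiniteMeasure_of_le (γ + σ) (Measure.le_add_left (le_refl σ))
  have := isFiniteMeasure_of_le (γ + σ) (Measure.le_add_right (le_refl γ))
  unfold partialCost
  rw [integral_add_measure hγ hσ, Measure.toReal_sub_apply_univ_of_le h.1,
    Measure.toReal_sub_apply_univ_of_le h.2, Measure.toReal_sub_apply_univ_of_le hγ0,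
    Measure.toReal_sub_apply_univ_of_le hγ1,
    Measure.map_add _ _ measurable_fst, Measure.map_add _ _ measurable_snd,
    measureReal_add_apply, measureReal_add_apply]
  simp only [map_measureReal_apply measurable_fst .univ, map_measureReal_apply measurable_snd .univ,
    preimage_univ]
  ring

end PartialCoupling

theorem supports_of_destroyed_and_created_mass_far_apart_general
    {d : ℕ} (Ω : Set (EuclideanSpace ℝ (Fin d)))
    (hΩc : IsCompact Ω)
    (lam : ℝ)
    (μ0 μ1 : Measure (EuclideanSpace ℝ (Fin d)))
    [IsFiniteMeasure μ0] [IsFiniteMeasure μ1]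
    (hμ0 : μ0 Ωᶜ = 0) (hμ1 : μ1 Ωᶜ = 0)
    (γstar : Measure (EuclideanSpace ℝ (Fin d) × EuclideanSpace ℝ (Fin d)))
    (hmem : IsPartialCoupling μ0 μ1 γstar)
    (hopt : ∀ γ, IsPartialCoupling μ0 μ1 γ →
      partialCost lam μ0 μ1 γstar ≤ partialCost lam μ0 μ1 γ) :
    ∀ x ∈ msupport (μ0 - γstar.map Prod.fst),
      ∀ y ∈ msupport (μ1 - γstar.map Prod.snd),
        Real.sqrt (2 * lam) ≤ ‖x - y‖ := by
  intro x hx y hy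
  by_contra! hxy
  obtain ⟨c, hxy_c, hc⟩ := exists_between ((Real.lt_sqrt (norm_nonneg _)).mp hxy)
  obtain ⟨ε, hε, hball⟩ := isOpen_iff.mp
    (isOpen_lt (by fun_prop) continuous_const : IsOpen {p : _ × _ | ‖p.1 - p.2‖ ^ 2 < c})
    (x, y) hxy_c
  rw [← ball_prod_same] at hball
  obtain ⟨σ, hσ, hσ_pos⟩ := exists_isPartialCoupling_restrict _ _
    (hx _ isOpen_ball (mem_ball_self hε)) (hy _ isOpen_ball (mem_ball_self hε))
  have hσ_le : ∀ᵐ p ∂σ, ‖‖p.1 - p.2‖ ^ 2‖ ≤ c :=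
    (hσ.ae_mem_prod (ae_restrict_mem measurableSet_ball) (ae_restrict_mem measurableSet_ball)).mono
      fun p hp => by simpa using (hball hp).le
  have hγσ := hmem.add (hσ.mono Measure.restrict_le_self Measure.restrict_le_self)
  have := hσ.isFiniteMeasure
  have hcost := hopt _ hγσ
  rw [partialCost_add lam hγσ (hmem.integrable_of_isCompact hΩc hμ0 hμ1 (by fun_prop))
    (.of_bound (by fun_prop) c hσ_le)] at hcost
  have hσ_cost : ∫ p, ‖p.1 - p.2‖ ^ 2 ∂σ ≤ c * σ.real univ :=
    (Real.le_norm_self _).trans (norm_integral_le_of_norm_le_const hσ_le)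
  linarith [mul_lt_mul_of_pos_right hc hσ_pos]

/-- If `γ*` is optimal for `OPT_λ(μ⁰,μ¹)` with marginals `γ₀*, γ₁*`,
and `ν⁰ = μ⁰ − γ₀*`, `ν¹ = μ¹ − γ₁*`, then the supports of `ν⁰` and `ν¹` are at
distance at least `√(2λ)`. -/
theorem supports_of_destroyed_and_created_mass_far_apart
    {d : ℕ} (Ω : Set (EuclideanSpace ℝ (Fin d)))
    (hΩc : IsCompact Ω) (hΩconv : Convex ℝ Ω)
    (lam : ℝ) (hlam : 0 ≤ lam)
    (μ0 μ1 : Measure (EuclideanSpace ℝ (Fin d)))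
    [IsFiniteMeasure μ0] [IsFiniteMeasure μ1]
    (hμ0 : μ0 Ωᶜ = 0) (hμ1 : μ1 Ωᶜ = 0)
    (γstar : Measure (EuclideanSpace ℝ (Fin d) × EuclideanSpace ℝ (Fin d)))
    (hmem : IsPartialCoupling μ0 μ1 γstar)
    (hopt : ∀ γ, IsPartialCoupling μ0 μ1 γ →
      partialCost lam μ0 μ1 γstar ≤ partialCost lam μ0 μ1 γ) :
    ∀ x ∈ msupport (μ0 - γstar.map Prod.fst),
      ∀ y ∈ msupport (μ1 - γstar.map Prod.snd),
        Real.sqrt (2 * lam) ≤ ‖x - y‖ :=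
  supports_of_destroyed_and_created_mass_far_apart_general Ω hΩc lam μ0 μ1 hμ0 hμ1 γstar hmem hopt
end

section
/- Let Ω be a compact convex subset of ℝ^d, λ ≥ 0, and let μ⁰, μʲ be finite positive Borel measures on Ω. Let γ* be optimal for OPT_λ(μ⁰,μʲ) and suppose γ* = (id × T)_# γ₀* for a Borel measurable map T: Ω → Ω, where γ₀*, γ₁* are the marginals of γ*. Then OPT_λ(μ⁰,μʲ) = ∫_Ω min(‖T(x) − x‖², 2λ) dγ₀*(x) + λ(|μ⁰ − γ₀*| + |μʲ − γ₁*|). -/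
/-! If a plan `γ*` is optimal for `OPT_λ`, removing the mass it moves over distances with
`‖x - y‖² > 2λ` lowers the transport cost by the integral of `‖x - y‖²` there and raises the
penalty by `2λ` times that mass; optimality therefore forces this mass to vanish. So `γ*` only
moves mass where `‖x - y‖² ≤ 2λ`, and for `γ* = (id × T)_# γ₀*` this means
`‖T x - x‖² = min (‖T x - x‖², 2λ)` for `γ₀*`-almost every `x`. Compactness of `Ω` is what makes
the transport cost integrable, so that the comparison of costs is meaningful. -/

open MeasureTheory

/-- The optimal partial transport value `OPT_λ(μ0,μ1)`: the infimum of the partial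
transport cost over all partial transport plans. -/
noncomputable def OPTval {d : ℕ} (lam : ℝ)
    (μ0 μ1 : Measure (EuclideanSpace ℝ (Fin d))) : ℝ :=
  sInf {c | ∃ γ, IsPartialCoupling μ0 μ1 γ ∧ c = partialCost lam μ0 μ1 γ}

theorem measure_lt_eq_zero_of_setIntegral_le {α : Type*} [MeasurableSpace α] {μ : Measure α}
    [IsFiniteMeasure μ] {f : α → ℝ} (hf : Integrable f μ) {t : ℝ}
    (h : ∫ x in {x | t < f x}, f x ∂μ ≤ t * μ.real {x | t < f x}) :
    μ {x | t < f x} = 0 := by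
  by_contra hne
  have hset : {x | (0 : ℝ) < f x - t} = {x | t < f x} := by simp only [sub_pos]
  have hpos := setIntegral_gt_gt (μ := μ) (f := fun x => f x - t) le_rfl
    (hf.sub (integrable_const t)).integrableOn (hset ▸ hne)
  rw [hset, integral_sub hf.integrableOn (integrable_const t), setIntegral_const,
    smul_eq_mul] at hpos
  linarith

section PartialTransport

variable {d : ℕ} {lam : ℝ} {μ0 μ1 : Measure (EuclideanSpace ℝ (Fin d))}
  {γ : Measure (EuclideanSpace ℝ (Fin d) × EuclideanSpace ℝ (Fin d))}

theorem OPTval_eq_partialCost_of_optimal (hγ : IsPartialCoupling μ0 μ1 γ)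
    (hopt : ∀ γ', IsPartialCoupling μ0 μ1 γ' → partialCost lam μ0 μ1 γ ≤ partialCost lam μ0 μ1 γ') :
    OPTval lam μ0 μ1 = partialCost lam μ0 μ1 γ := by
  have hlower : partialCost lam μ0 μ1 γ ∈
      lowerBounds {c | ∃ γ', IsPartialCoupling μ0 μ1 γ' ∧ c = partialCost lam μ0 μ1 γ'} := by
    rintro _ ⟨γ', hγ', rfl⟩
    exact hopt γ' hγ'
  exact IsLeast.csInf_eq ⟨⟨γ, hγ, rfl⟩, hlower⟩

theorem IsPartialCoupling.mono_s9 {γ' : Measure (EuclideanSpace ℝ (Fin d) × EuclideanSpace ℝ (Fin d))}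
    (hγ : IsPartialCoupling μ0 μ1 γ) (hle : γ' ≤ γ) : IsPartialCoupling μ0 μ1 γ' :=
  ⟨(Measure.map_mono hle measurable_fst).trans hγ.1,
    (Measure.map_mono hle measurable_snd).trans hγ.2⟩

theorem IsPartialCoupling.isFiniteMeasure_s9 [IsFiniteMeasure μ0] (hγ : IsPartialCoupling μ0 μ1 γ) :
    IsFiniteMeasure γ := by
  have : IsFiniteMeasure (γ.map Prod.fst) := isFiniteMeasure_of_le μ0 hγ.1
  exact Measure.isFiniteMeasure_of_map measurable_fst.aemeasurable

theorem IsPartialCoupling.ae_mem_prod_s9 {Ω : Set (EuclideanSpace ℝ (Fin d))}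
    (hγ : IsPartialCoupling μ0 μ1 γ) (hμ0 : μ0 Ωᶜ = 0) (hμ1 : μ1 Ωᶜ = 0) :
    ∀ᵐ p ∂γ, p ∈ Ω ×ˢ Ω := by
  have h0 : ∀ᵐ x ∂(γ.map Prod.fst), x ∈ Ω :=
    (Measure.absolutelyContinuous_of_le hγ.1).ae_le (mem_ae_iff.mpr hμ0)
  have h1 : ∀ᵐ x ∂(γ.map Prod.snd), x ∈ Ω :=
    (Measure.absolutelyContinuous_of_le hγ.2).ae_le (mem_ae_iff.mpr hμ1)
  filter_upwards [ae_of_ae_map measurable_fst.aemeasurable h0,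
    ae_of_ae_map measurable_snd.aemeasurable h1] with p hp0 hp1
  exact ⟨hp0, hp1⟩

theorem integrable_sq_norm_sub_of_ae_mem_prod [IsFiniteMeasure γ]
    {Ω : Set (EuclideanSpace ℝ (Fin d))} (hΩ : IsCompact Ω) (hγΩ : ∀ᵐ p ∂γ, p ∈ Ω ×ˢ Ω) :
    Integrable (fun p => ‖p.1 - p.2‖ ^ 2) γ := by
  have hcont : Continuous fun p : EuclideanSpace ℝ (Fin d) × EuclideanSpace ℝ (Fin d) =>
      ‖p.1 - p.2‖ ^ 2 := by fun_prop
  have := hcont.continuousOn.integrableOn_compact (μ := γ) (hΩ.prod hΩ)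
  rwa [IntegrableOn, Measure.restrict_eq_self_of_ae_mem hγΩ] at this

theorem IsPartialCoupling.penalty_eq [IsFiniteMeasure μ0] [IsFiniteMeasure μ1]
    (hγ : IsPartialCoupling μ0 μ1 γ) :
    ((μ0 - γ.map Prod.fst) Set.univ).toReal + ((μ1 - γ.map Prod.snd) Set.univ).toReal =
      μ0.real Set.univ + μ1.real Set.univ - 2 * γ.real Set.univ := by
  have : IsFiniteMeasure (γ.map Prod.fst) := isFiniteMeasure_of_le μ0 hγ.1
  have : IsFiniteMeasure (γ.map Prod.snd) := isFiniteMeasure_of_le μ1 hγ.2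
  have hfst : γ.map Prod.fst Set.univ = γ Set.univ := by
    rw [Measure.map_apply measurable_fst MeasurableSet.univ, Set.preimage_univ]
  have hsnd : γ.map Prod.snd Set.univ = γ Set.univ := by
    rw [Measure.map_apply measurable_snd MeasurableSet.univ, Set.preimage_univ]
  rw [Measure.sub_apply MeasurableSet.univ hγ.1, Measure.sub_apply MeasurableSet.univ hγ.2,
    ENNReal.toReal_sub_of_le (hγ.1 Set.univ) (measure_ne_top μ0 _),
    ENNReal.toReal_sub_of_le (hγ.2 Set.univ) (measure_ne_top μ1 _), hfst, hsnd]
  simp only [measureReal_def]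
  ring

theorem IsPartialCoupling.partialCost_eq_restrict_compl_add [IsFiniteMeasure μ0]
    [IsFiniteMeasure μ1] (hγ : IsPartialCoupling μ0 μ1 γ)
    (hint : Integrable (fun p => ‖p.1 - p.2‖ ^ 2) γ) {s : Set _} (hs : MeasurableSet s) :
    partialCost lam μ0 μ1 γ = partialCost lam μ0 μ1 (γ.restrict sᶜ) +
      ((∫ p in s, ‖p.1 - p.2‖ ^ 2 ∂γ) - 2 * lam * γ.real s) := by
  have : IsFiniteMeasure γ := hγ.isFiniteMeasure_s9
  rw [partialCost, partialCost, hγ.penalty_eq, (hγ.mono_s9 Measure.restrict_le_self).penalty_eq,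
    measureReal_restrict_apply_univ,
    ← integral_add_compl hs hint, ← measureReal_add_measureReal_compl hs]
  ring

theorem IsPartialCoupling.ae_sq_norm_sub_le_of_optimal [IsFiniteMeasure μ0] [IsFiniteMeasure μ1]
    (hγ : IsPartialCoupling μ0 μ1 γ)
    (hopt : ∀ γ', IsPartialCoupling μ0 μ1 γ' → partialCost lam μ0 μ1 γ ≤ partialCost lam μ0 μ1 γ')
    (hint : Integrable (fun p => ‖p.1 - p.2‖ ^ 2) γ) :
    ∀ᵐ p ∂γ, ‖p.1 - p.2‖ ^ 2 ≤ 2 * lam := by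
  have : IsFiniteMeasure γ := hγ.isFiniteMeasure_s9
  set s := {p : EuclideanSpace ℝ (Fin d) × EuclideanSpace ℝ (Fin d) | 2 * lam < ‖p.1 - p.2‖ ^ 2}
  have hs : MeasurableSet s := measurableSet_lt measurable_const (by fun_prop)
  have hle := hopt _ (hγ.mono_s9 (Measure.restrict_le_self (s := sᶜ)))
  rw [hγ.partialCost_eq_restrict_compl_add hint hs] at hle
  have hnull : γ s = 0 := measure_lt_eq_zero_of_setIntegral_le hint (by linarith)
  simpa only [ae_iff, not_le] using hnull

end PartialTransport

theorem opt_value_eq_truncated_cost_of_map_general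
    {d : ℕ} (Ω : Set (EuclideanSpace ℝ (Fin d)))
    (hΩc : IsCompact Ω)
    (lam : ℝ)
    (μ0 μj : Measure (EuclideanSpace ℝ (Fin d)))
    [IsFiniteMeasure μ0] [IsFiniteMeasure μj]
    (hμ0 : μ0 Ωᶜ = 0) (hμj : μj Ωᶜ = 0)
    (γstar : Measure (EuclideanSpace ℝ (Fin d) × EuclideanSpace ℝ (Fin d)))
    (hmem : IsPartialCoupling μ0 μj γstar)
    (hopt : ∀ γ, IsPartialCoupling μ0 μj γ →
      partialCost lam μ0 μj γstar ≤ partialCost lam μ0 μj γ)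
    (T : EuclideanSpace ℝ (Fin d) → EuclideanSpace ℝ (Fin d))
    (hT : Measurable T)
    (hγT : γstar = (γstar.map Prod.fst).map (fun x => (x, T x))) :
    OPTval lam μ0 μj =
      (∫ x, min (‖T x - x‖ ^ 2) (2 * lam) ∂(γstar.map Prod.fst)) +
        lam * (((μ0 - γstar.map Prod.fst) Set.univ).toReal +
               ((μj - γstar.map Prod.snd) Set.univ).toReal) := by
  have : IsFiniteMeasure γstar := hmem.isFiniteMeasure_s9
  have hint := integrable_sq_norm_sub_of_ae_mem_prod hΩc (hmem.ae_mem_prod_s9 hμ0 hμj)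
  have hshort := hmem.ae_sq_norm_sub_le_of_optimal hopt hint
  set γ0 := γstar.map Prod.fst
  have hgraph : Measurable fun x => (x, T x) := measurable_id.prodMk hT
  rw [hγT] at hshort
  have hshort0 := ae_of_ae_map hgraph.aemeasurable hshort
  have hcost : ∫ p, ‖p.1 - p.2‖ ^ 2 ∂γstar = ∫ x, min (‖T x - x‖ ^ 2) (2 * lam) ∂γ0 := by
    rw [hγT, integral_map hgraph.aemeasurable (by fun_prop)]
    refine integral_congr_ae ?_
    filter_upwards [hshort0] with x hx
    rw [norm_sub_rev] at hx ⊢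
    exact (min_eq_left hx).symm
  rw [OPTval_eq_partialCost_of_optimal hmem hopt, partialCost, hcost]

/-- If `γ* = (id × T)_# γ₀*` is optimal for `OPT_λ(μ⁰,μʲ)`, then
`OPT_λ(μ⁰,μʲ) = ∫ min(‖T(x)−x‖², 2λ) dγ₀* + λ(|μ⁰−γ₀*| + |μʲ−γ₁*|)`. -/
theorem opt_value_eq_truncated_cost_of_map
    {d : ℕ} (Ω : Set (EuclideanSpace ℝ (Fin d)))
    (hΩc : IsCompact Ω) (hΩconv : Convex ℝ Ω)
    (lam : ℝ) (hlam : 0 ≤ lam)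
    (μ0 μj : Measure (EuclideanSpace ℝ (Fin d)))
    [IsFiniteMeasure μ0] [IsFiniteMeasure μj]
    (hμ0 : μ0 Ωᶜ = 0) (hμj : μj Ωᶜ = 0)
    (γstar : Measure (EuclideanSpace ℝ (Fin d) × EuclideanSpace ℝ (Fin d)))
    (hmem : IsPartialCoupling μ0 μj γstar)
    (hopt : ∀ γ, IsPartialCoupling μ0 μj γ →
      partialCost lam μ0 μj γstar ≤ partialCost lam μ0 μj γ)
    (T : EuclideanSpace ℝ (Fin d) → EuclideanSpace ℝ (Fin d))
    (hT : Measurable T)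
    (hγT : γstar = (γstar.map Prod.fst).map (fun x => (x, T x))) :
    OPTval lam μ0 μj =
      (∫ x, min (‖T x - x‖ ^ 2) (2 * lam) ∂(γstar.map Prod.fst)) +
        lam * (((μ0 - γstar.map Prod.fst) Set.univ).toReal +
               ((μj - γstar.map Prod.snd) Set.univ).toReal) :=
  opt_value_eq_truncated_cost_of_map_general Ω hΩc lam μ0 μj hμ0 hμj γstar hmem hopt T hT hγT
end

section
/- Let μ⁰ = Σ_{n=1}^{N₀} p⁰ₙ δ_{x⁰ₙ} and μʲ = Σ_{m=1}^{Nⱼ} pʲₘ δ_{xʲₘ} be discrete positive measures on ℝ^d, λ ≥ 0, and let γ be an optimal partial coupling for OPT_λ(μ⁰,μʲ). Let p̂ₙ = Σ_{m=1}^{Nⱼ} γₙₘ and let x̂ₙ be the OPT barycentric points (x̂ₙ = (1/p̂ₙ) Σₘ γₙₘ xʲₘ if p̂ₙ > 0, and x̂ₙ = x⁰ₙ if p̂ₙ = 0). Then the map x⁰ₙ ↦ x̂ₙ solves OPT_λ(μ⁰,μ̂ʲ), where μ̂ʲ = Σ_{n=1}^{N₀} p̂ₙ δ_{x̂ₙ}: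 the diagonal matrix diag(p̂₁,…,p̂_{N₀}) is an optimal partial coupling for OPT_λ(μ⁰,μ̂ʲ), i.e. for every matrix γ̂ ∈ ℝ^{N₀×N₀} with nonnegative entries, row sums ≤ p⁰ entrywise and column sums ≤ p̂ entrywise, one has Σ_{n=1}^{N₀} p̂ₙ ‖x⁰ₙ − x̂ₙ‖² + λ(|p⁰| + |p̂| − 2|p̂|) ≤ Σ_{n,k=1}^{N₀} ‖x⁰ₙ − x̂ₖ‖² γ̂ₙₖ + λ(|p⁰| + |p̂| − 2|γ̂|). -/
open scoped BigOperators

/-- A partial coupling between discrete positive measures with weight vectors `p`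
and `q`: a nonnegative matrix whose row sums are `≤ p` and column sums are `≤ q`. -/
def IsPartialCouplingMat {N M : ℕ} (p : Fin N → ℝ) (q : Fin M → ℝ)
    (γ : Matrix (Fin N) (Fin M) ℝ) : Prop :=
  (∀ n m, 0 ≤ γ n m) ∧ (∀ n, ∑ m, γ n m ≤ p n) ∧ (∀ m, ∑ n, γ n m ≤ q m)

/-- The discrete partial transport cost
`C_λ(γ) = Σ ‖xₙ − yₘ‖² γₙₘ + λ(|p| + |q| − 2|γ|)`. -/
noncomputable def partialCostMat {d N M : ℕ} (lam : ℝ) (p : Fin N → ℝ) (q : Fin M → ℝ)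
    (x : Fin N → EuclideanSpace ℝ (Fin d)) (y : Fin M → EuclideanSpace ℝ (Fin d))
    (γ : Matrix (Fin N) (Fin M) ℝ) : ℝ :=
  (∑ n, ∑ m, ‖x n - y m‖ ^ 2 * γ n m) +
    lam * ((∑ n, p n) + (∑ m, q m) - 2 * ∑ n, ∑ m, γ n m)

/-!
Glue an admissible plan `γ̂` for `OPT_λ(μ⁰, μ̂ʲ)` with `γ` through the middle marginal `p̂`,
i.e. form `γ' = γ̂ · diag(p̂)⁻¹ · γ`. This is an admissible plan for `OPT_λ(μ⁰, μʲ)` with the same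
mass as `γ̂`. Since `x̂ₖ` is the barycenter of row `k` of `γ`, the parallel axis theorem
`Σₘ ‖a − xʲₘ‖² γₖₘ = p̂ₖ ‖a − x̂ₖ‖² + Vₖ` splits both transport costs, and since the column sums of
`γ̂` are at most `p̂`, the cost of `γ'` exceeds that of `γ̂` by at most `Σₖ Vₖ`, while the cost of
`γ` exceeds that of `diag(p̂)` by exactly `Σₖ Vₖ`. Optimality of `γ` therefore transfers.
-/

open Finset

section Barycenter

variable {μ E : Type*} [Fintype μ] [NormedAddCommGroup E] [InnerProductSpace ℝ E]

theorem sum_norm_sub_sq_mul_eq_of_barycenter (w : μ → ℝ) (b : μ → E) (a c : E)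
    (hc : (∑ m, w m) • c = ∑ m, w m • b m) :
    ∑ m, ‖a - b m‖ ^ 2 * w m = (∑ m, w m) * ‖a - c‖ ^ 2 + ∑ m, ‖c - b m‖ ^ 2 * w m := by
  have hcross : ∑ m, inner ℝ (a - c) (c - b m) * w m = 0 := by
    simp_rw [mul_comm _ (w _), ← real_inner_smul_right, ← inner_sum, smul_sub, sum_sub_distrib,
      ← sum_smul, hc, sub_self, inner_zero_right]
  calc ∑ m, ‖a - b m‖ ^ 2 * w m
      = ∑ m, (‖a - c‖ ^ 2 + 2 * inner ℝ (a - c) (c - b m) + ‖c - b m‖ ^ 2) * w m := by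
        congr! 2 with m
        rw [← norm_add_sq_real, sub_add_sub_cancel]
    _ = (∑ m, w m) * ‖a - c‖ ^ 2 + ∑ m, ‖c - b m‖ ^ 2 * w m := by
        simp only [add_mul, sum_add_distrib, mul_assoc, ← mul_sum]
        linear_combination 2 * hcross

theorem sum_smul_barycenter (w : μ → ℝ) (hw : ∀ m, 0 ≤ w m) (b : μ → E) (c₀ : E) :
    (∑ m, w m) • (if 0 < ∑ m, w m then (∑ m, w m)⁻¹ • ∑ m, w m • b m else c₀) =
      ∑ m, w m • b m := by
  split_ifs with hpos
  · rw [smul_smul, mul_inv_cancel₀ hpos.ne', one_smul]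
  · have hzero : ∑ m, w m = 0 := le_antisymm (not_lt.1 hpos) (sum_nonneg fun m _ => hw m)
    rw [sum_eq_zero_iff_of_nonneg fun m _ => hw m] at hzero
    simp [hzero]

end Barycenter

section Gluing

variable {ι κ μ : Type*}

/-- `γ₁ · diag(q)⁻¹ · γ₂`; thanks to `0⁻¹ = 0`, indices `k` with `q k = 0` simply drop out. -/
noncomputable def gluedCoupling [Fintype κ] (γ₁ : Matrix ι κ ℝ) (q : κ → ℝ)
    (γ₂ : Matrix κ μ ℝ) : Matrix ι μ ℝ :=
  fun n m => ∑ k, γ₁ n k * (q k)⁻¹ * γ₂ k m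

variable {γ₁ : Matrix ι κ ℝ} {q : κ → ℝ} {γ₂ : Matrix κ μ ℝ}

theorem sum_mul_gluedCoupling [Fintype κ] [Fintype μ] (c : μ → ℝ) (n : ι) :
    ∑ m, c m * gluedCoupling γ₁ q γ₂ n m = ∑ k, γ₁ n k * (q k)⁻¹ * ∑ m, c m * γ₂ k m := by
  simp only [gluedCoupling, mul_sum]
  rw [sum_comm]
  exact sum_congr rfl fun k _ => sum_congr rfl fun m _ => by ring

theorem mul_inv_mul_cancel_of_sum_le [Fintype ι] (hγ₁ : ∀ n k, 0 ≤ γ₁ n k)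
    (hcol : ∀ k, ∑ n, γ₁ n k ≤ q k) (n : ι) (k : κ) : γ₁ n k * (q k)⁻¹ * q k = γ₁ n k := by
  rcases eq_or_ne (q k) 0 with hq | hq
  · have hle : γ₁ n k ≤ 0 :=
      hq ▸ (single_le_sum (fun i _ => hγ₁ i k) (mem_univ n)).trans (hcol k)
    simp [le_antisymm hle (hγ₁ n k)]
  · field_simp

theorem sum_mul_inv_le_one [Fintype ι] (hγ₁ : ∀ n k, 0 ≤ γ₁ n k)
    (hcol : ∀ k, ∑ n, γ₁ n k ≤ q k) (k : κ) : (∑ n, γ₁ n k) * (q k)⁻¹ ≤ 1 :=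
  mul_inv_le_one_of_le₀ (hcol k) ((sum_nonneg fun n _ => hγ₁ n k).trans (hcol k))

theorem sum_gluedCoupling [Fintype ι] [Fintype κ] [Fintype μ] (hγ₁ : ∀ n k, 0 ≤ γ₁ n k)
    (hcol : ∀ k, ∑ n, γ₁ n k ≤ q k) (hrow₂ : ∀ k, ∑ m, γ₂ k m = q k) (n : ι) :
    ∑ m, gluedCoupling γ₁ q γ₂ n m = ∑ k, γ₁ n k := by
  simpa [hrow₂, mul_inv_mul_cancel_of_sum_le hγ₁ hcol] using
    sum_mul_gluedCoupling (γ₁ := γ₁) (q := q) (γ₂ := γ₂) 1 n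

theorem sum_gluedCoupling_le [Fintype ι] [Fintype κ] (hγ₁ : ∀ n k, 0 ≤ γ₁ n k)
    (hcol : ∀ k, ∑ n, γ₁ n k ≤ q k) (hγ₂ : ∀ k m, 0 ≤ γ₂ k m) (m : μ) :
    ∑ n, gluedCoupling γ₁ q γ₂ n m ≤ ∑ k, γ₂ k m := by
  simp only [gluedCoupling]
  rw [sum_comm]
  gcongr with k
  rw [← sum_mul, ← sum_mul]
  exact mul_le_of_le_one_left (hγ₂ k m) (sum_mul_inv_le_one hγ₁ hcol k)

theorem sum_sum_mul_gluedCoupling_le [Fintype ι] [Fintype κ] [Fintype μ]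
    (hγ₁ : ∀ n k, 0 ≤ γ₁ n k) (hcol : ∀ k, ∑ n, γ₁ n k ≤ q k)
    (c : ι → μ → ℝ) (c' : ι → κ → ℝ) (V : κ → ℝ) (hV : ∀ k, 0 ≤ V k)
    (hsplit : ∀ n k, ∑ m, c n m * γ₂ k m = q k * c' n k + V k) :
    ∑ n, ∑ m, c n m * gluedCoupling γ₁ q γ₂ n m ≤
      ∑ n, ∑ k, c' n k * γ₁ n k + ∑ k, V k := by
  calc ∑ n, ∑ m, c n m * gluedCoupling γ₁ q γ₂ n m
      = ∑ n, ∑ k, (c' n k * γ₁ n k + γ₁ n k * (q k)⁻¹ * V k) := by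
        refine sum_congr rfl fun n _ => ?_
        rw [sum_mul_gluedCoupling]
        refine sum_congr rfl fun k _ => ?_
        rw [hsplit]
        linear_combination c' n k * mul_inv_mul_cancel_of_sum_le hγ₁ hcol n k
    _ = ∑ n, ∑ k, c' n k * γ₁ n k + ∑ k, (∑ n, γ₁ n k) * (q k)⁻¹ * V k := by
        simp only [sum_add_distrib, sum_mul]
        rw [sum_comm (f := fun n k => γ₁ n k * (q k)⁻¹ * V k)]
    _ ≤ ∑ n, ∑ k, c' n k * γ₁ n k + ∑ k, V k := by
        gcongr with k
        exact mul_le_of_le_one_left (hV k) (sum_mul_inv_le_one hγ₁ hcol k)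

end Gluing

theorem isPartialCouplingMat_gluedCoupling {N K M : ℕ} {p : Fin N → ℝ} {q : Fin K → ℝ}
    {s : Fin M → ℝ} {γ₁ : Matrix (Fin N) (Fin K) ℝ} {γ₂ : Matrix (Fin K) (Fin M) ℝ}
    (h₁ : IsPartialCouplingMat p q γ₁) (hγ₂ : ∀ k m, 0 ≤ γ₂ k m)
    (hcol₂ : ∀ m, ∑ k, γ₂ k m ≤ s m) (hrow₂ : ∀ k, ∑ m, γ₂ k m = q k) :
    IsPartialCouplingMat p s (gluedCoupling γ₁ q γ₂) := by
  obtain ⟨hγ₁, hrow₁, hcol₁⟩ := h₁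
  refine ⟨fun n m => ?_, fun n => ?_, fun m => ?_⟩
  · refine sum_nonneg fun k _ => mul_nonneg (mul_nonneg (hγ₁ n k) (inv_nonneg.2 ?_)) (hγ₂ k m)
    exact hrow₂ k ▸ sum_nonneg fun m _ => hγ₂ k m
  · exact (sum_gluedCoupling hγ₁ hcol₁ hrow₂ n).trans_le (hrow₁ n)
  · exact (sum_gluedCoupling_le hγ₁ hcol₁ hγ₂ m).trans (hcol₂ m)

theorem opt_barycentric_projection_diag_optimal_general
    {d N0 Nj : ℕ}
    (lam : ℝ)
    (p0 : Fin N0 → ℝ) (pj : Fin Nj → ℝ)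
    (x0 : Fin N0 → EuclideanSpace ℝ (Fin d)) (xj : Fin Nj → EuclideanSpace ℝ (Fin d))
    (γ : Matrix (Fin N0) (Fin Nj) ℝ)
    (hγ : IsPartialCouplingMat p0 pj γ)
    (hγopt : ∀ γ', IsPartialCouplingMat p0 pj γ' →
      partialCostMat lam p0 pj x0 xj γ ≤ partialCostMat lam p0 pj x0 xj γ')
    (phat : Fin N0 → ℝ) (hphat : ∀ n, phat n = ∑ m, γ n m)
    (xhat : Fin N0 → EuclideanSpace ℝ (Fin d))
    (hxhat : ∀ n, xhat n =
      if 0 < phat n then (phat n)⁻¹ • ∑ m, γ n m • xj m else x0 n) :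
    ∀ γhat : Matrix (Fin N0) (Fin N0) ℝ,
      (∀ n k, 0 ≤ γhat n k) → (∀ n, ∑ k, γhat n k ≤ p0 n) →
      (∀ k, ∑ n, γhat n k ≤ phat k) →
      (∑ n, phat n * ‖x0 n - xhat n‖ ^ 2) +
          lam * ((∑ n, p0 n) + (∑ n, phat n) - 2 * ∑ n, phat n) ≤
        (∑ n, ∑ k, ‖x0 n - xhat k‖ ^ 2 * γhat n k) +
          lam * ((∑ n, p0 n) + (∑ n, phat n) - 2 * ∑ n, ∑ k, γhat n k) := by
  intro γhat hnn hrow hcol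
  obtain ⟨hγnn, -, hγcol⟩ := hγ
  set V : Fin N0 → ℝ := fun k => ∑ m, ‖xhat k - xj m‖ ^ 2 * γ k m
  have hsplit : ∀ n k, ∑ m, ‖x0 n - xj m‖ ^ 2 * γ k m = phat k * ‖x0 n - xhat k‖ ^ 2 + V k := by
    intro n k
    have hbary := sum_smul_barycenter (γ k) (hγnn k) xj (x0 k)
    rw [← hphat k, ← hxhat k, hphat k] at hbary
    rw [sum_norm_sub_sq_mul_eq_of_barycenter (γ k) xj (x0 n) (xhat k) hbary, hphat k]
  have hfeas : IsPartialCouplingMat p0 pj (gluedCoupling γhat phat γ) :=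
    isPartialCouplingMat_gluedCoupling ⟨hnn, hrow, hcol⟩ hγnn hγcol fun k => (hphat k).symm
  have hcost := sum_sum_mul_gluedCoupling_le hnn hcol _ _ V
    (fun k => sum_nonneg fun m _ => mul_nonneg (sq_nonneg _) (hγnn k m)) hsplit
  have hopt := hγopt _ hfeas
  simp only [partialCostMat, hsplit, sum_add_distrib, ← hphat,
    sum_gluedCoupling hnn hcol fun k => (hphat k).symm] at hopt
  linarith

/-- If `γ` is an optimal partial coupling for `OPT_λ(μ⁰,μʲ)`, then
the diagonal matrix `diag(p̂)` is an optimal partial coupling for `OPT_λ(μ⁰,μ̂ʲ)`,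
where `p̂ₙ = Σₘ γₙₘ` and `x̂ₙ` are the OPT barycentric points. -/
theorem opt_barycentric_projection_diag_optimal
    {d N0 Nj : ℕ}
    (lam : ℝ) (hlam : 0 ≤ lam)
    (p0 : Fin N0 → ℝ) (pj : Fin Nj → ℝ)
    (x0 : Fin N0 → EuclideanSpace ℝ (Fin d)) (xj : Fin Nj → EuclideanSpace ℝ (Fin d))
    (hp0 : ∀ n, 0 < p0 n) (hpj : ∀ m, 0 < pj m)
    (γ : Matrix (Fin N0) (Fin Nj) ℝ)
    (hγ : IsPartialCouplingMat p0 pj γ)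
    (hγopt : ∀ γ', IsPartialCouplingMat p0 pj γ' →
      partialCostMat lam p0 pj x0 xj γ ≤ partialCostMat lam p0 pj x0 xj γ')
    (phat : Fin N0 → ℝ) (hphat : ∀ n, phat n = ∑ m, γ n m)
    (xhat : Fin N0 → EuclideanSpace ℝ (Fin d))
    (hxhat : ∀ n, xhat n =
      if 0 < phat n then (phat n)⁻¹ • ∑ m, γ n m • xj m else x0 n) :
    ∀ γhat : Matrix (Fin N0) (Fin N0) ℝ,
      (∀ n k, 0 ≤ γhat n k) → (∀ n, ∑ k, γhat n k ≤ p0 n) →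
      (∀ k, ∑ n, γhat n k ≤ phat k) →
      (∑ n, phat n * ‖x0 n - xhat n‖ ^ 2) +
          lam * ((∑ n, p0 n) + (∑ n, phat n) - 2 * ∑ n, phat n) ≤
        (∑ n, ∑ k, ‖x0 n - xhat k‖ ^ 2 * γhat n k) +
          lam * ((∑ n, p0 n) + (∑ n, phat n) - 2 * ∑ n, ∑ k, γhat n k) :=
  opt_barycentric_projection_diag_optimal_general lam p0 pj x0 xj γ hγ hγopt phat hphat xhat hxhat
end

section
/- Let μ⁰ = Σ_{n=1}^{N₀} p⁰ₙ δ_{x⁰ₙ} and μʲ = Σ_{m=1}^{Nⱼ} pʲₘ δ_{xʲₘ} be discrete positive measures on ℝ^d, λ ≥ 0, and let γ be an optimal partial coupling for OPT_λ(μ⁰,μʲ) that is induced by a map, i.e. each row of γ has at most one nonzero entry. Let p̂ₙ = Σₘ γₙₘ, let x̂ₙ be the OPT barycentric points, and let μ̂ʲ = Σ_{n=1}^{N₀} p̂ₙ δ_{x̂ₙ} be the OPT barycentric projection. Then OPT_λ(μ⁰,μʲ) = OPT_λ(μ⁰,μ̂ʲ) + λ(|μʲ| − |μ̂ʲ|),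 where |μʲ| = Σₘ pʲₘ and |μ̂ʲ| = Σₙ p̂ₙ. -/
open scoped BigOperators

/-- The discrete optimal partial transport value: the infimum of the partial
transport cost over all partial couplings. -/
noncomputable def OPTvalMat {d N M : ℕ} (lam : ℝ) (p : Fin N → ℝ) (q : Fin M → ℝ)
    (x : Fin N → EuclideanSpace ℝ (Fin d)) (y : Fin M → EuclideanSpace ℝ (Fin d)) : ℝ :=
  sInf {c | ∃ γ : Matrix (Fin N) (Fin M) ℝ,
    IsPartialCouplingMat p q γ ∧ c = partialCostMat lam p q x y γ}

/-!
If every row of the optimal plan `γ` is concentrated on one point, then testing a row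
against `‖z - ·‖²` is the same as testing the mass `p̂ₖ` placed at the barycentre `x̂ₖ`.
Hence gluing a plan `η` between `μ⁰` and `μ̂ʲ` with `γ` (sending the mass `ηₙₖ` along the
`k`-th row of `γ`, normalised by `p̂ₖ`) yields a plan between `μ⁰` and `μʲ` of cost
`C(η) + λ(|μʲ| − |μ̂ʲ|)`, and gluing the diagonal plan `diag p̂` gives back `γ` itself.
So `diag p̂` is optimal for `μ̂ʲ`, and both optimal values are read off from `γ`.
-/

theorem sum_mul_eq_of_support_subsingleton {ι E : Type*} [Fintype ι] [AddCommGroup E]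
    [Module ℝ E] {w : ι → ℝ} (hw : ∀ i, 0 ≤ w i) (hsupp : (Function.support w).Subsingleton)
    (f : E → ℝ) (y : ι → E) {b : E}
    (hb : 0 < ∑ i, w i → b = (∑ i, w i)⁻¹ • ∑ i, w i • y i) :
    ∑ i, f (y i) * w i = f b * ∑ i, w i := by
  rcases hsupp.eq_empty_or_singleton with hempty | ⟨i₀, hi₀⟩
  · simp [Function.support_eq_empty_iff.1 hempty]
  have hzero : ∀ i, i ≠ i₀ → w i = 0 := fun i hi =>
    Function.notMem_support.1 (hi₀ ▸ Set.notMem_singleton_iff.2 hi)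
  have hpos : 0 < w i₀ := (hw i₀).lt_of_ne' (hi₀ ▸ Set.mem_singleton i₀ : i₀ ∈ _)
  have hsum : ∑ i, w i = w i₀ := Fintype.sum_eq_single i₀ hzero
  have hb' : b = y i₀ := by
    rw [hb (hsum ▸ hpos), hsum, Fintype.sum_eq_single i₀ fun i hi => by simp [hzero i hi],
      inv_smul_smul₀ hpos.ne']
  rw [hsum, hb', Fintype.sum_eq_single i₀ fun i hi => by simp [hzero i hi]]

section Coupling

variable {d N K M : ℕ}

theorem IsPartialCouplingMat.apply_eq_zero_of_right_eq_zero {p : Fin N → ℝ} {q : Fin K → ℝ}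
    {η : Matrix (Fin N) (Fin K) ℝ} (hη : IsPartialCouplingMat p q η) {k : Fin K}
    (hk : q k = 0) (n : Fin N) : η n k = 0 :=
  (Finset.sum_eq_zero_iff_of_nonneg fun n _ => hη.1 n k).1
    (le_antisymm (hk ▸ hη.2.2 k) (Finset.sum_nonneg fun n _ => hη.1 n k)) n
    (Finset.mem_univ n)

theorem isPartialCouplingMat_diagonal {p q : Fin N → ℝ} (hq : ∀ n, 0 ≤ q n)
    (hqp : ∀ n, q n ≤ p n) : IsPartialCouplingMat p q (Matrix.diagonal q) := by
  refine ⟨fun n k => ?_, fun n => ?_, fun k => ?_⟩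
  · rw [Matrix.diagonal_apply]
    split_ifs
    exacts [hq n, le_rfl]
  · simpa [Matrix.diagonal_apply] using hqp n
  · simp [Matrix.diagonal_apply]

theorem OPTvalMat_eq_of_optimal {lam : ℝ} {p : Fin N → ℝ} {q : Fin M → ℝ}
    {x : Fin N → EuclideanSpace ℝ (Fin d)} {y : Fin M → EuclideanSpace ℝ (Fin d)}
    {γ : Matrix (Fin N) (Fin M) ℝ} (hγ : IsPartialCouplingMat p q γ)
    (hopt : ∀ γ', IsPartialCouplingMat p q γ' →
      partialCostMat lam p q x y γ ≤ partialCostMat lam p q x y γ') :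
    OPTvalMat lam p q x y = partialCostMat lam p q x y γ :=
  IsLeast.csInf_eq ⟨⟨γ, hγ, rfl⟩, by rintro c ⟨γ', hγ', rfl⟩; exact hopt γ' hγ'⟩

noncomputable def glueMat (η : Matrix (Fin N) (Fin K) ℝ) (q : Fin K → ℝ)
    (γ : Matrix (Fin K) (Fin M) ℝ) : Matrix (Fin N) (Fin M) ℝ :=
  fun n m => ∑ k, η n k / q k * γ k m

variable {η : Matrix (Fin N) (Fin K) ℝ} {q : Fin K → ℝ} {γ : Matrix (Fin K) (Fin M) ℝ}

theorem sum_mul_glueMat (c : Fin M → ℝ) (n : Fin N) :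
    ∑ m, c m * glueMat η q γ n m = ∑ k, η n k / q k * ∑ m, c m * γ k m := by
  simp only [glueMat, Finset.mul_sum]
  rw [Finset.sum_comm]
  exact Finset.sum_congr rfl fun k _ => Finset.sum_congr rfl fun m _ => by ring

theorem glueMat_diagonal (hγ : ∀ k m, 0 ≤ γ k m) (hq : ∀ k, q k = ∑ m, γ k m) :
    glueMat (Matrix.diagonal q) q γ = γ := by
  ext n m
  have hrow : q n = 0 → γ n m = 0 := fun h =>
    (Finset.sum_eq_zero_iff_of_nonneg fun m _ => hγ n m).1 ((hq n).symm.trans h) m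
      (Finset.mem_univ m)
  simp only [glueMat, Matrix.diagonal_apply, ite_div, zero_div, ite_mul, zero_mul,
    Finset.sum_ite_eq, Finset.mem_univ, if_true]
  by_cases h : q n = 0
  · simp [h, hrow h]
  · rw [div_self h, one_mul]

variable {p : Fin N → ℝ}

theorem sum_glueMat (hη : IsPartialCouplingMat p q η) (hq : ∀ k, q k = ∑ m, γ k m)
    (n : Fin N) : ∑ m, glueMat η q γ n m = ∑ k, η n k := by
  simpa [← hq, div_mul_cancel_of_imp (hη.apply_eq_zero_of_right_eq_zero · n)]
    using sum_mul_glueMat (η := η) (q := q) (γ := γ) (fun _ => 1) n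

theorem isPartialCouplingMat_glueMat {r : Fin M → ℝ} (hη : IsPartialCouplingMat p q η)
    (hγ : ∀ k m, 0 ≤ γ k m) (hγr : ∀ m, ∑ k, γ k m ≤ r m) (hq : ∀ k, q k = ∑ m, γ k m) :
    IsPartialCouplingMat p r (glueMat η q γ) := by
  have hq0 : ∀ k, 0 ≤ q k := fun k => (hq k).symm ▸ Finset.sum_nonneg fun m _ => hγ k m
  refine ⟨fun n m => Finset.sum_nonneg fun k _ =>
    mul_nonneg (div_nonneg (hη.1 n k) (hq0 k)) (hγ k m), fun n => ?_, fun m => ?_⟩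
  · exact sum_glueMat hη hq n ▸ hη.2.1 n
  · calc ∑ n, glueMat η q γ n m = ∑ k, (∑ n, η n k) / q k * γ k m := by
          simp only [glueMat, Finset.sum_div, Finset.sum_mul]
          exact Finset.sum_comm
      _ ≤ ∑ k, γ k m := Finset.sum_le_sum fun k _ =>
          mul_le_of_le_one_left (hγ k m) (div_le_one_of_le₀ (hη.2.2 k) (hq0 k))
      _ ≤ r m := hγr m

theorem partialCostMat_glueMat {lam : ℝ} {r : Fin M → ℝ} {x : Fin N → EuclideanSpace ℝ (Fin d)}
    {y : Fin M → EuclideanSpace ℝ (Fin d)} {yhat : Fin K → EuclideanSpace ℝ (Fin d)}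
    (hη : IsPartialCouplingMat p q η) (hq : ∀ k, q k = ∑ m, γ k m)
    (hbary : ∀ n k, ∑ m, ‖x n - y m‖ ^ 2 * γ k m = ‖x n - yhat k‖ ^ 2 * q k) :
    partialCostMat lam p r x y (glueMat η q γ) =
      partialCostMat lam p q x yhat η + lam * ((∑ m, r m) - ∑ k, q k) := by
  have htransport : ∀ n, ∑ m, ‖x n - y m‖ ^ 2 * glueMat η q γ n m =
      ∑ k, ‖x n - yhat k‖ ^ 2 * η n k := fun n => by
    rw [sum_mul_glueMat]
    exact Finset.sum_congr rfl fun k _ => by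
      rw [hbary, mul_left_comm,
        div_mul_cancel_of_imp (hη.apply_eq_zero_of_right_eq_zero · n)]
  simp only [partialCostMat, htransport, sum_glueMat hη hq]
  ring

end Coupling

theorem opt_barycentric_projection_recovers_opt_general
    {d N0 Nj : ℕ}
    (lam : ℝ)
    (p0 : Fin N0 → ℝ) (pj : Fin Nj → ℝ)
    (x0 : Fin N0 → EuclideanSpace ℝ (Fin d)) (xj : Fin Nj → EuclideanSpace ℝ (Fin d))
    (γ : Matrix (Fin N0) (Fin Nj) ℝ)
    (hγ : IsPartialCouplingMat p0 pj γ)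
    (hγopt : ∀ γ', IsPartialCouplingMat p0 pj γ' →
      partialCostMat lam p0 pj x0 xj γ ≤ partialCostMat lam p0 pj x0 xj γ')
    (hmap : ∀ n m m', γ n m ≠ 0 → γ n m' ≠ 0 → m = m')
    (phat : Fin N0 → ℝ) (hphat : ∀ n, phat n = ∑ m, γ n m)
    (xhat : Fin N0 → EuclideanSpace ℝ (Fin d))
    (hxhat : ∀ n, xhat n =
      if 0 < phat n then (phat n)⁻¹ • ∑ m, γ n m • xj m else x0 n) :
    OPTvalMat lam p0 pj x0 xj =
      OPTvalMat lam p0 phat x0 xhat + lam * ((∑ m, pj m) - ∑ n, phat n) := by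
  have hbary : ∀ n k, ∑ m, ‖x0 n - xj m‖ ^ 2 * γ k m = ‖x0 n - xhat k‖ ^ 2 * phat k :=
    fun n k => by
      rw [hphat]
      exact sum_mul_eq_of_support_subsingleton (hγ.1 k) (fun _ h _ h' => hmap k _ _ h h')
        (‖x0 n - ·‖ ^ 2) xj fun h => by rw [hxhat, hphat, if_pos h]
  have hdiag : IsPartialCouplingMat p0 phat (Matrix.diagonal phat) :=
    isPartialCouplingMat_diagonal
      (fun n => (hphat n).symm ▸ Finset.sum_nonneg fun m _ => hγ.1 n m)
      fun n => (hphat n).symm ▸ hγ.2.1 n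
  have hglue := fun η (hη : IsPartialCouplingMat p0 phat η) =>
    partialCostMat_glueMat (lam := lam) (r := pj) hη hphat hbary
  have hdiag_cost := hglue _ hdiag
  rw [glueMat_diagonal hγ.1 hphat] at hdiag_cost
  rw [OPTvalMat_eq_of_optimal hγ hγopt, OPTvalMat_eq_of_optimal hdiag fun η hη => ?_]
  · linarith
  · have hle := hγopt _ (isPartialCouplingMat_glueMat hη hγ.1 hγ.2.2 hphat)
    linarith [hglue η hη]

/-- If the optimal partial coupling `γ` for `OPT_λ(μ⁰,μʲ)` is
induced by a map, then `OPT_λ(μ⁰,μʲ) = OPT_λ(μ⁰,μ̂ʲ) + λ(|μʲ| − |μ̂ʲ|)`, where `μ̂ʲ`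
is the OPT barycentric projection of `μʲ` with respect to `μ⁰`. -/
theorem opt_barycentric_projection_recovers_opt
    {d N0 Nj : ℕ}
    (lam : ℝ) (hlam : 0 ≤ lam)
    (p0 : Fin N0 → ℝ) (pj : Fin Nj → ℝ)
    (x0 : Fin N0 → EuclideanSpace ℝ (Fin d)) (xj : Fin Nj → EuclideanSpace ℝ (Fin d))
    (hp0 : ∀ n, 0 < p0 n) (hpj : ∀ m, 0 < pj m)
    (γ : Matrix (Fin N0) (Fin Nj) ℝ)
    (hγ : IsPartialCouplingMat p0 pj γ)
    (hγopt : ∀ γ', IsPartialCouplingMat p0 pj γ' →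
      partialCostMat lam p0 pj x0 xj γ ≤ partialCostMat lam p0 pj x0 xj γ')
    (hmap : ∀ n m m', γ n m ≠ 0 → γ n m' ≠ 0 → m = m')
    (phat : Fin N0 → ℝ) (hphat : ∀ n, phat n = ∑ m, γ n m)
    (xhat : Fin N0 → EuclideanSpace ℝ (Fin d))
    (hxhat : ∀ n, xhat n =
      if 0 < phat n then (phat n)⁻¹ • ∑ m, γ n m • xj m else x0 n) :
    OPTvalMat lam p0 pj x0 xj =
      OPTvalMat lam p0 phat x0 xhat + lam * ((∑ m, pj m) - ∑ n, phat n) :=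
  opt_barycentric_projection_recovers_opt_general lam p0 pj x0 xj γ hγ hγopt hmap phat hphat xhat
    hxhat
end
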